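/- arXiv:1410.2654 — 3 statements merged into one kernel-verified Lean document; each statement's English description precedes it below -/
import Mathlib

section
/- (Upper fundamental inequality.) Let γ > 0, let z ∈ H, let λ > 0, and set z⁺ := T_λ(z). Then for every x ∈ V: 2γλ(f(x_f) + h(x_h) − f(x) − h(x) + S_f(x_f, x) + S_h(x_h, x)) ≤ ‖z − x‖² − ‖z⁺ − x‖² + (1 − 2/λ)‖z⁺ − z‖² + 2γ⟪∇h(x_h), z − z⁺⟫. -/
/-!
Both operator steps of FDRS are characterised by first-order inequalities: `x_f` is a proximal
point, so `u = (2 x_h - z - γ ∇h(x_h) - x_f) / γ` is a subgradient of `f` at `x_f`, while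
`x_h` carries the gradient `∇h(x_h)`. Strong convexity, and cocoercivity of `1/β`-Lipschitz
gradients of convex functions (from the descent lemma), strengthen the subgradient inequalities
by `S_f(x_f, x)` and `S_h(x_h, x)`. Since `z⁺ = z + λ (x_f - x_h)`, expanding the squares turns
the right-hand side into `2γλ (⟪u, x_f - x⟫ + ⟪∇h(x_h), x_h - x⟫) + 2λ ⟪z - x_h, x_h - x⟫`, and
the last term vanishes because `z - x_h ⊥ V ∋ x_h - x`.
-/

open scoped RealInnerProductSpace NNReal
open Set InnerProductSpace Filter Topology

theorem le_of_forall_mem_Ioo_le_add_mul {a b c : ℝ} (h : ∀ t ∈ Ioo (0 : ℝ) 1, a ≤ b + t * c) :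
    a ≤ b := by
  have hlim : Tendsto (fun t : ℝ => b + t * c) (𝓝[>] 0) (𝓝 b) := by
    have : Continuous (fun t : ℝ => b + t * c) := by fun_prop
    simpa using (this.tendsto 0).mono_left nhdsWithin_le_nhds
  exact ge_of_tendsto hlim (eventually_of_mem (Ioo_mem_nhdsGT one_pos) h)

section InnerProductSpace

variable {E : Type*} [NormedAddCommGroup E] [InnerProductSpace ℝ E]

/-- The hypothesis `hu` is a subgradient inequality up to a quadratic error: it holds with
`C = 0` for gradients of convex functions and with `C = 1 / (2γ)` at a proximal point. -/
theorem StrongConvexOn.add_inner_add_sq_le {f : E → ℝ} {m C : ℝ} (hf : StrongConvexOn univ m f)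
    {p u : E} (hu : ∀ w, f p + ⟪u, w - p⟫ ≤ f w + C * ‖w - p‖ ^ 2) (x : E) :
    f p + ⟪u, x - p⟫ + m / 2 * ‖x - p‖ ^ 2 ≤ f x := by
  refine le_of_forall_mem_Ioo_le_add_mul (c := (m / 2 + C) * ‖x - p‖ ^ 2) fun t ht => ?_
  have hsub := hu (t • x + (1 - t) • p)
  have hconv := hf.2 (mem_univ x) (mem_univ p) ht.1.le (sub_nonneg.2 ht.2.le) (by ring)
  have hstep : t • x + (1 - t) • p - p = t • (x - p) := by module
  rw [hstep, inner_smul_right, norm_smul, mul_pow, Real.norm_eq_abs, sq_abs] at hsub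
  simp only [smul_eq_mul] at hconv
  have : t * (f p + ⟪u, x - p⟫ + m / 2 * ‖x - p‖ ^ 2)
      ≤ t * (f x + t * ((m / 2 + C) * ‖x - p‖ ^ 2)) := by
    nlinarith
  exact le_of_mul_le_mul_left this ht.1

theorem IsMinOn.add_inner_le_add_sq_of_prox {f : E → ℝ} {γ : ℝ} {r p : E}
    (hp : IsMinOn (fun y => f y + 1 / (2 * γ) * ‖y - r‖ ^ 2) univ p) (w : E) :
    f p + ⟪γ⁻¹ • (r - p), w - p⟫ ≤ f w + 1 / (2 * γ) * ‖w - p‖ ^ 2 := by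
  have hmin : f p + 1 / (2 * γ) * ‖p - r‖ ^ 2 ≤ f w + 1 / (2 * γ) * ‖w - r‖ ^ 2 :=
    hp (mem_univ w)
  have hexp : ‖w - r‖ ^ 2 = ‖w - p‖ ^ 2 - 2 * ⟪r - p, w - p⟫ + ‖p - r‖ ^ 2 := by
    rw [show w - r = (w - p) - (r - p) by abel, norm_sub_sq_real, real_inner_comm,
      norm_sub_rev r p]
  rw [hexp] at hmin
  rw [real_inner_smul_left, show γ⁻¹ = 2 * (1 / (2 * γ)) by ring]
  linear_combination hmin

theorem fdrs_norm_sq_identity {z zp x xh xf G u : E} {γ lam : ℝ} (hlam : lam ≠ 0)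
    (hzp : zp = z + lam • (xf - xh)) (hu : γ • u = (2 : ℝ) • xh - z - γ • G - xf) :
    ‖z - x‖ ^ 2 - ‖zp - x‖ ^ 2 + (1 - 2 / lam) * ‖zp - z‖ ^ 2 + 2 * γ * ⟪G, z - zp⟫
      = 2 * γ * lam * (⟪u, xf - x⟫ + ⟪G, xh - x⟫) + 2 * lam * ⟪z - xh, xh - x⟫ := by
  have hγu : γ * ⟪u, xf - x⟫ = ⟪(2 : ℝ) • xh - z - γ • G - xf, xf - x⟫ := by
    rw [← real_inner_smul_left, hu]
  subst hzp
  rw [show 2 * γ * lam * (⟪u, xf - x⟫ + ⟪G, xh - x⟫)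
    = 2 * lam * (γ * ⟪u, xf - x⟫) + 2 * γ * lam * ⟪G, xh - x⟫ by ring, hγu]
  simp only [← real_inner_self_eq_norm_sq, inner_sub_left, inner_sub_right, inner_add_left,
    inner_add_right, real_inner_smul_left, real_inner_smul_right, real_inner_comm z x,
    real_inner_comm z xf, real_inner_comm z xh, real_inner_comm xh xf, real_inner_comm xf x,
    real_inner_comm xh x]
  field_simp
  ring

variable [CompleteSpace E]

theorem HasGradientAt.hasDerivAt_comp_add_smul {f : E → ℝ} {G p v : E} {t : ℝ}
    (hf : HasGradientAt f G (p + t • v)) :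
    HasDerivAt (fun s : ℝ => f (p + s • v)) ⟪G, v⟫ t := by
  have hline : HasDerivAt (fun s : ℝ => p + s • v) v t := by
    simpa using ((hasDerivAt_id t).smul_const v).const_add p
  have := (hasGradientAt_iff_hasFDerivAt.mp hf).comp_hasDerivAt t hline
  simp only [toDual_apply_apply] at this
  exact this

theorem HasGradientAt.comp_continuousLinearMap {F : Type*} [NormedAddCommGroup F]
    [InnerProductSpace ℝ F] [CompleteSpace F] {g : F → ℝ} {G : F} {x : E} (A : E →L[ℝ] F)
    (hg : HasGradientAt g G (A x)) : HasGradientAt (fun y => g (A y)) (A.adjoint G) x := by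
  rw [hasGradientAt_iff_hasFDerivAt] at hg ⊢
  refine (hg.comp x A.hasFDerivAt).congr_fderiv ?_
  ext v
  simp [ContinuousLinearMap.adjoint_inner_left]

theorem ConvexOn.add_inner_le_of_hasGradientAt {f : E → ℝ} {G p : E}
    (hf : ConvexOn ℝ univ f) (hG : HasGradientAt f G p) (x : E) :
    f p + ⟪G, x - p⟫ ≤ f x := by
  have hline : ConvexOn ℝ univ (fun t : ℝ => f (p + t • (x - p))) := by
    simpa [Function.comp_def, AffineMap.lineMap_apply_module', add_comm] using
      hf.comp_affineMap (AffineMap.lineMap p x : ℝ →ᵃ[ℝ] E)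
  have hderiv : HasDerivAt (fun t : ℝ => f (p + t • (x - p))) ⟪G, x - p⟫ 0 :=
    HasGradientAt.hasDerivAt_comp_add_smul (by simpa using hG)
  have := hline.le_slope_of_hasDerivAt (mem_univ 0) (mem_univ 1) one_pos hderiv
  simp only [slope_def_field, one_smul, add_sub_cancel, zero_smul, add_zero, sub_zero,
    div_one] at this
  linarith

theorem HasGradientAt.eq_of_forall_le_add_sq {f : E → ℝ} {G p u : E} {C : ℝ}
    (hG : HasGradientAt f G p) (hu : ∀ w, f p + ⟪u, w - p⟫ ≤ f w + C * ‖w - p‖ ^ 2) :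
    G = u := by
  set v := G - u
  have hmin : IsLocalMin (fun s : ℝ => f (p + s • v) - s * ⟪u, v⟫ + C * s ^ 2 * ‖v‖ ^ 2) 0 :=
    Filter.Eventually.of_forall fun s => by
      have := hu (p + s • v)
      rw [add_sub_cancel_left, inner_smul_right, norm_smul, mul_pow, Real.norm_eq_abs,
        sq_abs] at this
      simp only [zero_smul, add_zero, zero_mul, sub_zero, ne_eq, OfNat.ofNat_ne_zero,
        not_false_eq_true, zero_pow, mul_zero]
      linarith
  have hderiv : HasDerivAt (fun s : ℝ => f (p + s • v) - s * ⟪u, v⟫ + C * s ^ 2 * ‖v‖ ^ 2)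
      (⟪G, v⟫ - ⟪u, v⟫) 0 := by
    have h1 := HasGradientAt.hasDerivAt_comp_add_smul (v := v) (t := 0) (by simpa using hG)
    have h2 := (hasDerivAt_id (0 : ℝ)).mul_const ⟪u, v⟫
    have h3 := ((hasDerivAt_pow 2 (0 : ℝ)).const_mul C).mul_const (‖v‖ ^ 2)
    exact ((h1.sub h2).add h3).congr_deriv (by simp)
  have := hmin.hasDerivAt_eq_zero hderiv
  rw [← inner_sub_left, real_inner_self_eq_norm_sq, sq_eq_zero_iff, norm_eq_zero] at this
  exact sub_eq_zero.mp this

theorem le_add_inner_add_sq_of_lipschitzWith {f : E → ℝ} {G : E → E} {L : ℝ≥0}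
    (hG : ∀ x, HasGradientAt f (G x) x) (hL : LipschitzWith L G) (u v : E) :
    f v ≤ f u + ⟪G u, v - u⟫ + L / 2 * ‖v - u‖ ^ 2 := by
  set χ : ℝ → ℝ :=
    fun t => f (u + t • (v - u)) - t * ⟪G u, v - u⟫ - L * t ^ 2 / 2 * ‖v - u‖ ^ 2
  have hχ : ∀ t : ℝ, HasDerivAt χ
      (⟪G (u + t • (v - u)) - G u, v - u⟫ - L * t * ‖v - u‖ ^ 2) t := by
    intro t
    have h1 := (hG (u + t • (v - u))).hasDerivAt_comp_add_smul
    have h2 := (hasDerivAt_id t).mul_const ⟪G u, v - u⟫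
    have h3 := (((hasDerivAt_pow 2 t).const_mul (L : ℝ)).div_const 2).mul_const (‖v - u‖ ^ 2)
    refine ((h1.sub h2).sub h3).congr_deriv ?_
    rw [inner_sub_left]
    simp only [one_mul, Nat.cast_ofNat, Nat.reduceSub, pow_one]
    ring
  have hanti : AntitoneOn χ (Icc 0 1) := by
    refine antitoneOn_of_deriv_nonpos (convex_Icc 0 1)
      (fun t _ => (hχ t).continuousAt.continuousWithinAt)
      (fun t _ => (hχ t).differentiableAt.differentiableWithinAt) fun t ht => ?_
    rw [interior_Icc] at ht
    rw [(hχ t).deriv, sub_nonpos]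
    calc ⟪G (u + t • (v - u)) - G u, v - u⟫ ≤ ‖G (u + t • (v - u)) - G u‖ * ‖v - u‖ :=
          real_inner_le_norm _ _
      _ ≤ L * ‖t • (v - u)‖ * ‖v - u‖ := by
          gcongr
          simpa [dist_eq_norm] using hL.dist_le_mul (u + t • (v - u)) u
      _ = L * t * ‖v - u‖ ^ 2 := by
          rw [norm_smul, Real.norm_eq_abs, abs_of_pos ht.1]; ring
  have := hanti (left_mem_Icc.2 zero_le_one) (right_mem_Icc.2 zero_le_one) zero_le_one
  simp only [χ, one_smul, add_sub_cancel, one_mul, one_pow, mul_one, zero_smul, add_zero,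
    zero_mul, sub_zero, ne_eq, OfNat.ofNat_ne_zero, not_false_eq_true, zero_pow, mul_zero,
    zero_div, tsub_le_iff_right] at this
  linarith

/-- Test the subgradient inequality at `x - b (∇f x - ∇f y)` and apply the descent lemma. -/
theorem ConvexOn.add_inner_add_sq_sub_le {f : E → ℝ} {G : E → E} {b : ℝ} (hb : 0 < b)
    (hf : ConvexOn ℝ univ f) (hG : ∀ x, HasGradientAt f (G x) x)
    (hL : LipschitzWith (1 / b).toNNReal G) (x y : E) :
    f y + ⟪G y, x - y⟫ + b / 2 * ‖G x - G y‖ ^ 2 ≤ f x := by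
  set v := x - b • (G x - G y)
  have hlow := hf.add_inner_le_of_hasGradientAt (hG y) v
  have hdesc := le_add_inner_add_sq_of_lipschitzWith hG hL x v
  rw [Real.coe_toNNReal _ (by positivity)] at hdesc
  have hv : v - x = -(b • (G x - G y)) := by simp only [v]; abel
  have hvy : v - y = (x - y) - b • (G x - G y) := by simp only [v]; abel
  rw [hv, norm_neg, norm_smul, Real.norm_eq_abs, abs_of_pos hb, inner_neg_right,
    inner_smul_right] at hdesc
  rw [hvy, inner_sub_right, inner_smul_right] at hlow
  have hsq : ⟪G x, G x - G y⟫ - ⟪G y, G x - G y⟫ = ‖G x - G y‖ ^ 2 := by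
    rw [← inner_sub_left, real_inner_self_eq_norm_sq]
  have hquad : 1 / b / 2 * (b * ‖G x - G y‖) ^ 2 = b / 2 * ‖G x - G y‖ ^ 2 := by
    field_simp
  linear_combination hlow + hdesc + hquad - b * hsq

theorem sub_add_le_inner_of_isMinOn_prox {f : E → ℝ} {gradf : E → E} {γ μ βf : ℝ} {r p : E}
    (hp : IsMinOn (fun y => f y + 1 / (2 * γ) * ‖y - r‖ ^ 2) univ p)
    (hfconv : ConvexOn ℝ univ f) (hfstrong : StrongConvexOn univ μ f)
    (hfgrad : 0 < βf → ∀ x, HasGradientAt f (gradf x) x)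
    (hfgradlip : 0 < βf → LipschitzWith (1 / βf).toNNReal gradf) (x : E) :
    f p - f x + (if 0 < βf then max (μ / 2 * ‖p - x‖ ^ 2) (βf / 2 * ‖gradf p - gradf x‖ ^ 2)
      else μ / 2 * ‖p - x‖ ^ 2) ≤ ⟪γ⁻¹ • (r - p), p - x⟫ := by
  have hsub := hp.add_inner_le_add_sq_of_prox
  have hflip : ⟪γ⁻¹ • (r - p), x - p⟫ = -⟪γ⁻¹ • (r - p), p - x⟫ := by
    rw [← inner_neg_right, neg_sub]
  have hμ : f p - f x + μ / 2 * ‖p - x‖ ^ 2 ≤ ⟪γ⁻¹ • (r - p), p - x⟫ := by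
    have := hfstrong.add_inner_add_sq_le hsub x
    rw [hflip, norm_sub_rev] at this
    linarith
  split_ifs with hβf
  · have hgrad : gradf p = γ⁻¹ • (r - p) := (hfgrad hβf p).eq_of_forall_le_add_sq hsub
    have hβ := hfconv.add_inner_add_sq_sub_le hβf (hfgrad hβf) (hfgradlip hβf) x p
    rw [hgrad, hflip, norm_sub_rev] at hβ
    rw [hgrad]
    exact add_le_of_le_sub_left (max_le (by linarith) (by linarith))
  · exact hμ

theorem comp_continuousLinearMap_sub_add_le_inner {F : Type*} [NormedAddCommGroup F]
    [InnerProductSpace ℝ F] [CompleteSpace F] {g : F → ℝ} {gradg : F → F} {μ b : ℝ}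
    (A : E →L[ℝ] F) (hb : 0 < b) (hgconv : ConvexOn ℝ univ g)
    (hgstrong : StrongConvexOn univ μ g) (hgrad : ∀ x, HasGradientAt g (gradg x) x)
    (hlip : LipschitzWith (1 / b).toNNReal fun x => A.adjoint (gradg (A x))) (x y : E) :
    g (A y) - g (A x) + max (μ / 2 * ‖A y - A x‖ ^ 2)
        (b / 2 * ‖A.adjoint (gradg (A y)) - A.adjoint (gradg (A x))‖ ^ 2)
      ≤ ⟪A.adjoint (gradg (A y)), y - x⟫ := by
  have hadj : ⟪A.adjoint (gradg (A y)), x - y⟫ = ⟪gradg (A y), A x - A y⟫ := by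
    rw [ContinuousLinearMap.adjoint_inner_left, map_sub]
  have hflip : ⟪A.adjoint (gradg (A y)), x - y⟫ = -⟪A.adjoint (gradg (A y)), y - x⟫ := by
    rw [← inner_neg_right, neg_sub]
  have hμ := hgstrong.add_inner_add_sq_le (C := 0)
    (fun w => by simpa using hgconv.add_inner_le_of_hasGradientAt (hgrad (A y)) w) (A x)
  have hβ := (hgconv.comp_linearMap A.toLinearMap).add_inner_add_sq_sub_le hb
    (fun w => (hgrad (A w)).comp_continuousLinearMap A) hlip x y
  rw [hadj.symm.trans hflip, norm_sub_rev] at hμ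
  rw [hflip, norm_sub_rev] at hβ
  simp only [Function.comp_apply, ContinuousLinearMap.coe_coe] at hβ
  exact add_le_of_le_sub_left (max_le (by linarith) (by linarith))

end InnerProductSpace

theorem fdrs_upper_fundamental_inequality_general
    {H : Type*} [NormedAddCommGroup H] [InnerProductSpace ℝ H] [CompleteSpace H]
    (V : Submodule ℝ H) [CompleteSpace V]
    (PV : H → H) (hPV : ∀ x, PV x = (V.orthogonalProjection x : H))
    (f g : H → ℝ) (gradg gradh gradf proxf : H → H) (h : H → ℝ)
    (βV γ : ℝ) (hβV : 0 < βV) (hγ : 0 < γ)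
    (hfconv : ConvexOn ℝ Set.univ f)
    (hgconv : ConvexOn ℝ Set.univ g)
    (hgdiff : ∀ x, HasGradientAt g (gradg x) x)
    (hh : ∀ x, h x = g (PV x))
    (hgradh : ∀ x, gradh x = PV (gradg (PV x)))
    (hgradhlip : LipschitzWith (1 / βV).toNNReal gradh)
    (hprox : ∀ x, IsMinOn (fun y => f y + (1 / (2 * γ)) * ‖y - x‖ ^ 2) Set.univ (proxf x))
    (T : H → H)
    (hT : ∀ z, T z = (1 / 2 : ℝ) • (z - γ • gradh z)
        + (1 / 2 : ℝ) • ((2 : ℝ) • proxf ((2 : ℝ) • PV (z - γ • gradh z) - (z - γ • gradh z))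
            - ((2 : ℝ) • PV (z - γ • gradh z) - (z - γ • gradh z))))
    -- strong convexity / smoothness constants
    (μf μg βf : ℝ)
    (hfstrong : StrongConvexOn Set.univ μf f)
    (hgstrong : StrongConvexOn Set.univ μg g)
    (hfgrad : 0 < βf → ∀ x, HasGradientAt f (gradf x) x)
    (hfgradlip : 0 < βf → LipschitzWith (1 / βf).toNNReal gradf)
    (Sf Sh : H → H → ℝ)
    (hSf : ∀ x y, Sf x y = if 0 < βf then
        max (μf / 2 * ‖x - y‖ ^ 2) (βf / 2 * ‖gradf x - gradf y‖ ^ 2)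
      else μf / 2 * ‖x - y‖ ^ 2)
    (hSh : ∀ x y, Sh x y
        = max (μg / 2 * ‖PV x - PV y‖ ^ 2) (βV / 2 * ‖gradh x - gradh y‖ ^ 2))
    -- the points associated with a given z ∈ H and λ > 0
    (z zp xh xf : H) (lam : ℝ) (hlam : 0 < lam)
    (hzp : zp = (1 - lam) • z + lam • T z)
    (hxh : xh = PV z)
    (hxf : xf = proxf ((2 : ℝ) • PV (z - γ • gradh z) - (z - γ • gradh z))) :
    ∀ x : H, x ∈ V →
      2 * γ * lam * (f xf + h xh - f x - h x + Sf xf x + Sh xh x)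
        ≤ ‖z - x‖ ^ 2 - ‖zp - x‖ ^ 2 + (1 - 2 / lam) * ‖zp - z‖ ^ 2
          + 2 * γ * ⟪gradh xh, z - zp⟫ := by
  intro x hx
  obtain rfl : PV = V.starProjection := funext hPV
  have hproj_idem : ∀ y, V.starProjection (V.starProjection y) = V.starProjection y :=
    fun y => V.starProjection_eq_self_iff.mpr (V.starProjection_apply_mem y)
  have hgradh_mem : ∀ y, V.starProjection (gradh y) = gradh y := fun y => by
    rw [hgradh, hproj_idem]
  have hgradh_xh : gradh xh = gradh z := by rw [hxh, hgradh, hgradh, hproj_idem]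
  have hreflect : (2 : ℝ) • V.starProjection (z - γ • gradh z) - (z - γ • gradh z)
      = (2 : ℝ) • xh - z - γ • gradh xh := by
    rw [map_sub, map_smul, hgradh_mem, ← hxh, hgradh_xh]; module
  have hzp' : zp = z + lam • (xf - xh) := by
    rw [hzp, hT, ← hxf, hreflect, hgradh_xh]; module
  set u := γ⁻¹ • ((2 : ℝ) • xh - z - γ • gradh xh - xf) with hu
  have hγu : γ • u = (2 : ℝ) • xh - z - γ • gradh xh - xf := by
    rw [hu, smul_smul, mul_inv_cancel₀ hγ.ne', one_smul]
  have hf_bound : f xf - f x + Sf xf x ≤ ⟪u, xf - x⟫ := by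
    rw [hSf]
    refine sub_add_le_inner_of_isMinOn_prox ?_ hfconv hfstrong hfgrad hfgradlip x
    have := hprox ((2 : ℝ) • V.starProjection (z - γ • gradh z) - (z - γ • gradh z))
    rwa [← hxf, hreflect] at this
  have hh_bound : h xh - h x + Sh xh x ≤ ⟪gradh xh, xh - x⟫ := by
    have hadj := (isSelfAdjoint_starProjection V).adjoint_eq
    obtain rfl : gradh = fun y => V.starProjection (gradg (V.starProjection y)) := funext hgradh
    have := comp_continuousLinearMap_sub_add_le_inner V.starProjection hβV hgconv hgstrong hgdiff
      (by simpa [hadj] using hgradhlip) x xh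
    simpa [hSh, hh, hadj] using this
  have horth : ⟪z - xh, xh - x⟫ = 0 :=
    hxh ▸ V.starProjection_inner_eq_zero z _ (V.sub_mem (hxh ▸ V.starProjection_apply_mem z) hx)
  rw [fdrs_norm_sq_identity hlam.ne' hzp' hγu, horth, mul_zero, add_zero]
  exact mul_le_mul_of_nonneg_left (by linarith) (by positivity)

/-- the upper fundamental inequality. -/
theorem fdrs_upper_fundamental_inequality
    {H : Type*} [NormedAddCommGroup H] [InnerProductSpace ℝ H] [CompleteSpace H]
    (V : Submodule ℝ H) [CompleteSpace V]
    (PV : H → H) (hPV : ∀ x, PV x = (V.orthogonalProjection x : H))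
    (f g : H → ℝ) (gradg gradh gradf proxf : H → H) (h : H → ℝ)
    (β βV γ : ℝ) (hβ : 0 < β) (hβV : 0 < βV) (hγ : 0 < γ)
    (hfconv : ConvexOn ℝ Set.univ f) (hfcont : Continuous f)
    (hgconv : ConvexOn ℝ Set.univ g)
    (hgdiff : ∀ x, HasGradientAt g (gradg x) x)
    (hglip : LipschitzWith (1 / β).toNNReal gradg)
    (hh : ∀ x, h x = g (PV x))
    (hgradh : ∀ x, gradh x = PV (gradg (PV x)))
    (hgradhlip : LipschitzWith (1 / βV).toNNReal gradh)
    (hprox : ∀ x, IsMinOn (fun y => f y + (1 / (2 * γ)) * ‖y - x‖ ^ 2) Set.univ (proxf x))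
    (T : H → H)
    (hT : ∀ z, T z = (1 / 2 : ℝ) • (z - γ • gradh z)
        + (1 / 2 : ℝ) • ((2 : ℝ) • proxf ((2 : ℝ) • PV (z - γ • gradh z) - (z - γ • gradh z))
            - ((2 : ℝ) • PV (z - γ • gradh z) - (z - γ • gradh z))))
    -- strong convexity / smoothness constants
    (μf μg βf : ℝ) (hμf : 0 ≤ μf) (hμg : 0 ≤ μg) (hβf : 0 ≤ βf)
    (hfstrong : StrongConvexOn Set.univ μf f)
    (hgstrong : StrongConvexOn Set.univ μg g)
    (hfgrad : 0 < βf → ∀ x, HasGradientAt f (gradf x) x)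
    (hfgradlip : 0 < βf → LipschitzWith (1 / βf).toNNReal gradf)
    (Sf Sh : H → H → ℝ)
    (hSf : ∀ x y, Sf x y = if 0 < βf then
        max (μf / 2 * ‖x - y‖ ^ 2) (βf / 2 * ‖gradf x - gradf y‖ ^ 2)
      else μf / 2 * ‖x - y‖ ^ 2)
    (hSh : ∀ x y, Sh x y
        = max (μg / 2 * ‖PV x - PV y‖ ^ 2) (βV / 2 * ‖gradh x - gradh y‖ ^ 2))
    -- the points associated with a given z ∈ H and λ > 0
    (z zp xh xf : H) (lam : ℝ) (hlam : 0 < lam)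
    (hzp : zp = (1 - lam) • z + lam • T z)
    (hxh : xh = PV z)
    (hxf : xf = proxf ((2 : ℝ) • PV (z - γ • gradh z) - (z - γ • gradh z))) :
    ∀ x : H, x ∈ V →
      2 * γ * lam * (f xf + h xh - f x - h x + Sf xf x + Sh xh x)
        ≤ ‖z - x‖ ^ 2 - ‖zp - x‖ ^ 2 + (1 - 2 / lam) * ‖zp - z‖ ^ 2
          + 2 * γ * ⟪gradh xh, z - zp⟫ :=
  fdrs_upper_fundamental_inequality_general V PV hPV f g gradg gradh gradf proxf h βV γ hβV hγ
    hfconv hgconv hgdiff hh hgradh hgradhlip hprox T hT μf μg βf hfstrong hgstrong hfgrad hfgradlip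
    Sf Sh hSf hSh z zp xh xf lam hlam hzp hxh hxf
end

section
/- (Gradient summability.) Let γ ∈ (0, 2β_V), let ε ∈ (0,1), and suppose (λ_k)_{k≥0} ⊆ (0, (1−ε)(1+εα)/α). Then for the FDRS iterates (z^k): Σ_{i=0}^∞ λ_i ‖∇h(z^i) − ∇h(z*)‖² ≤ (1+ε)‖z⁰ − z*‖² / (γε(2β_V − γ)). -/
/-!
The FDRS operator is `T = N ∘ (I - γ ∇h)` with `N = ½ I + ½ refl_{γf} ∘ refl_V`. The proximal
map is firmly nonexpansive, so `refl_{γf}` is nonexpansive, hence so is `refl_{γf} ∘ refl_V`,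
and `N` is firmly nonexpansive. By the Baillon–Haddad theorem `∇h` is `β_V`-cocoercive.
Firm nonexpansiveness of `N` at `z - γ ∇h z` and `z* - γ ∇h z*` together with cocoercivity
gives `‖z^{k+1} - z*‖² ≤ ‖z^k - z*‖² - λ_k D ‖∇h z^k - ∇h z*‖²` with
`D = ε γ (2 β_V - γ) / (1 + ε)`, provided `γ² ≤ (2 - λ_k) (2 γ β_V - D)`, which is what the
bound on `λ_k` amounts to. Summing this telescoping inequality gives the claim.
-/

open scoped RealInnerProductSpace
open Filter Topology Set

section Operators

variable {H : Type*} [NormedAddCommGroup H] [InnerProductSpace ℝ H]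

def FirmlyNonexpansive (F : H → H) : Prop :=
  ∀ x y, ‖F x - F y‖ ^ 2 ≤ ⟪F x - F y, x - y⟫

lemma norm_two_smul_sub_sq (p d : H) :
    ‖(2 : ℝ) • p - d‖ ^ 2 = ‖d‖ ^ 2 - 4 * (⟪p, d⟫ - ‖p‖ ^ 2) := by
  rw [norm_sub_sq_real, norm_smul, real_inner_smul_left, Real.norm_two]
  ring

theorem firmlyNonexpansive_iff_lipschitzWith_two_smul_sub {F : H → H} :
    FirmlyNonexpansive F ↔ LipschitzWith 1 fun x => (2 : ℝ) • F x - x := by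
  rw [lipschitzWith_iff_norm_sub_le]
  refine forall₂_congr fun x y => ?_
  rw [NNReal.coe_one, one_mul, ← sq_le_sq₀ (norm_nonneg _) (norm_nonneg _),
    show (2 : ℝ) • F x - x - ((2 : ℝ) • F y - y) = (2 : ℝ) • (F x - F y) - (x - y) by module,
    norm_two_smul_sub_sq]
  constructor <;> intro h <;> linarith

theorem firmlyNonexpansive_half_smul_add {R : H → H} (hR : LipschitzWith 1 R) :
    FirmlyNonexpansive fun x => (1 / 2 : ℝ) • x + (1 / 2 : ℝ) • R x := by
  rw [firmlyNonexpansive_iff_lipschitzWith_two_smul_sub]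
  convert hR using 2 with x
  module

theorem FirmlyNonexpansive.norm_sub_sq_add_norm_sub_sq_le {F : H → H}
    (hF : FirmlyNonexpansive F) (x y : H) :
    ‖F x - F y‖ ^ 2 + ‖(x - F x) - (y - F y)‖ ^ 2 ≤ ‖x - y‖ ^ 2 := by
  rw [show (x - F x) - (y - F y) = (x - y) - (F x - F y) by abel,
    norm_sub_sq_real (x - y), real_inner_comm]
  linarith [hF x y]

lemma nonneg_of_forall_mul_add_sq_mul_nonneg {a b : ℝ}
    (h : ∀ t ∈ Ioc (0 : ℝ) 1, 0 ≤ t * a + t ^ 2 * b) : 0 ≤ a := by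
  have hlim : Tendsto (fun t : ℝ => a + t * b) (𝓝[>] 0) (𝓝 a) := by
    have : Continuous fun t : ℝ => a + t * b := by fun_prop
    simpa using (this.tendsto 0).mono_left nhdsWithin_le_nhds
  refine ge_of_tendsto hlim ?_
  filter_upwards [Ioc_mem_nhdsGT zero_lt_one] with t ht
  have := h t ht
  have ht0 := ht.1
  nlinarith

theorem IsMinOn.inner_sub_le_of_convexOn {f : H → ℝ} (hf : ConvexOn ℝ univ f) {γ : ℝ}
    (hγ : 0 < γ) {x p : H}
    (hp : IsMinOn (fun y => f y + (1 / (2 * γ)) * ‖y - x‖ ^ 2) univ p) (y : H) :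
    ⟪x - p, y - p⟫ ≤ γ * (f y - f p) := by
  suffices 0 ≤ 2 * γ * (f y - f p) - 2 * ⟪x - p, y - p⟫ by linarith
  refine nonneg_of_forall_mul_add_sq_mul_nonneg (b := ‖y - p‖ ^ 2) fun t ht => ?_
  have hmin := hp (mem_univ (p + t • (y - p)))
  have hconv : f (p + t • (y - p)) ≤ (1 - t) * f p + t * f y := by
    have := hf.2 (mem_univ p) (mem_univ y) (sub_nonneg.2 ht.2) ht.1.le (by ring)
    simpa only [smul_eq_mul, show (1 - t) • p + t • y = p + t • (y - p) by module] using this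
  have hnorm : ‖p + t • (y - p) - x‖ ^ 2
      = ‖p - x‖ ^ 2 - 2 * t * ⟪x - p, y - p⟫ + t ^ 2 * ‖y - p‖ ^ 2 := by
    rw [show p + t • (y - p) - x = (p - x) + t • (y - p) by abel, norm_add_sq_real,
      real_inner_smul_right, norm_smul, mul_pow, Real.norm_eq_abs, sq_abs,
      ← neg_sub x p, inner_neg_left]
    ring
  simp only [mem_ofPred_eq, hnorm] at hmin
  have key : 0 ≤ t * (f y - f p)
      + 1 / (2 * γ) * (-(2 * t * ⟪x - p, y - p⟫) + t ^ 2 * ‖y - p‖ ^ 2) := by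
    linarith
  calc 0 ≤ 2 * γ * (t * (f y - f p)
        + 1 / (2 * γ) * (-(2 * t * ⟪x - p, y - p⟫) + t ^ 2 * ‖y - p‖ ^ 2)) :=
        mul_nonneg (by positivity) key
    _ = _ := by field_simp; ring

theorem firmlyNonexpansive_of_isMinOn_prox {f : H → ℝ} (hf : ConvexOn ℝ univ f) {γ : ℝ}
    (hγ : 0 < γ) {prox : H → H}
    (hprox : ∀ x, IsMinOn (fun y => f y + (1 / (2 * γ)) * ‖y - x‖ ^ 2) univ (prox x)) :
    FirmlyNonexpansive prox := by
  intro x y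
  have hx := (hprox x).inner_sub_le_of_convexOn hf hγ (prox y)
  have hy := (hprox y).inner_sub_le_of_convexOn hf hγ (prox x)
  have hsum : ⟪x - prox x, prox y - prox x⟫ + ⟪y - prox y, prox x - prox y⟫
      = ‖prox x - prox y‖ ^ 2 - ⟪prox x - prox y, x - y⟫ := by
    rw [← real_inner_self_eq_norm_sq]
    simp only [inner_sub_left, inner_sub_right]
    linear_combination real_inner_comm x (prox x) - real_inner_comm x (prox y)
      + real_inner_comm y (prox y) - real_inner_comm y (prox x)
  linarith

theorem FirmlyNonexpansive.douglasRachford {F : H → H} (hF : FirmlyNonexpansive F)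
    (V : Submodule ℝ H) [V.HasOrthogonalProjection] :
    FirmlyNonexpansive fun x => (1 / 2 : ℝ) • x + (1 / 2 : ℝ) •
      ((2 : ℝ) • F ((2 : ℝ) • V.starProjection x - x) - ((2 : ℝ) • V.starProjection x - x)) := by
  refine firmlyNonexpansive_half_smul_add ?_
  simpa [Function.comp_def, Submodule.reflection_apply, ofNat_smul_eq_nsmul] using
    (firmlyNonexpansive_iff_lipschitzWith_two_smul_sub.1 hF).comp V.reflection.lipschitz

theorem FirmlyNonexpansive.norm_relaxed_step_sub_sq_le {N G T : H → H} (hN : FirmlyNonexpansive N)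
    {β γ lam D : ℝ}
    (hG : ∀ x y, β * ‖G x - G y‖ ^ 2 ≤ ⟪G x - G y, x - y⟫) (hγ : 0 ≤ γ)
    (hT : ∀ z, T z = N (z - γ • G z)) (hlam0 : 0 ≤ lam) (hlam2 : lam < 2)
    (hD : γ ^ 2 ≤ (2 - lam) * (2 * γ * β - D)) {z zs : H} (hzs : T zs = zs) :
    ‖(1 - lam) • z + lam • T z - zs‖ ^ 2 ≤ ‖z - zs‖ ^ 2 - lam * D * ‖G z - G zs‖ ^ 2 := by
  set w := z - zs
  set u := G z - G zs
  set v := z - T z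
  have hfirm := hN.norm_sub_sq_add_norm_sub_sq_le (z - γ • G z) (zs - γ • G zs)
  rw [← hT, ← hT, hzs,
    show T z - zs = w - v by simp only [w, v]; abel,
    show z - γ • G z - T z - (zs - γ • G zs - zs) = v - γ • u by simp only [v, u]; module,
    show z - γ • G z - (zs - γ • G zs) = w - γ • u by simp only [w, u]; module,
    norm_sub_sq_real, norm_sub_sq_real v, norm_sub_sq_real w (γ • u), real_inner_smul_right,
    real_inner_smul_right, norm_smul, mul_pow, Real.norm_eq_abs, sq_abs] at hfirm
  have hco : β * ‖u‖ ^ 2 ≤ ⟪w, u⟫ := real_inner_comm u w ▸ hG z zs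
  have hcs : ⟪v, u⟫ ≤ ‖v‖ * ‖u‖ := real_inner_le_norm v u
  -- AM-GM, with the quadratic form in `(‖v‖, ‖u‖)` made nonnegative by `hD`
  have hamgm : 2 * γ * (‖v‖ * ‖u‖) ≤ (2 - lam) * ‖v‖ ^ 2 + (2 * γ * β - D) * ‖u‖ ^ 2 := by
    have h2 : 0 < 2 - lam := by linarith
    refine le_of_mul_le_mul_left ?_ h2
    nlinarith [sq_nonneg ((2 - lam) * ‖v‖ - γ * ‖u‖), mul_le_mul_of_nonneg_right hD (sq_nonneg ‖u‖)]
  have hkey : lam * ‖v‖ ^ 2 + D * ‖u‖ ^ 2 ≤ 2 * ⟪w, v⟫ := by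
    linarith [mul_le_mul_of_nonneg_left hco hγ, mul_le_mul_of_nonneg_left hcs hγ]
  rw [show (1 - lam) • z + lam • T z - zs = w - lam • v by simp only [w, v]; module,
    norm_sub_sq_real, real_inner_smul_right, norm_smul, mul_pow, Real.norm_eq_abs, sq_abs]
  linarith [mul_le_mul_of_nonneg_left hkey hlam0]

variable [CompleteSpace H]

lemma HasGradientAt.hasDerivAt_comp_add_smul_s7 {φ : H → ℝ} {φ' x d : H} {t : ℝ}
    (h : HasGradientAt φ φ' (x + t • d)) :
    HasDerivAt (fun s : ℝ => φ (x + s • d)) ⟪φ', d⟫ t := by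
  have hline : HasDerivAt (fun s : ℝ => x + s • d) d t := by
    simpa using ((hasDerivAt_id t).smul_const d).const_add x
  simpa [Function.comp_def] using h.hasFDerivAt.comp_hasDerivAt t hline

theorem ConvexOn.add_inner_sub_le {φ : H → ℝ} (hφ : ConvexOn ℝ univ φ) {φ' x : H}
    (h : HasGradientAt φ φ' x) (y : H) : φ x + ⟪φ', y - x⟫ ≤ φ y := by
  have hline : ConvexOn ℝ univ fun t : ℝ => φ (x + t • (y - x)) := by
    simpa [Function.comp_def, AffineMap.lineMap_apply_module', add_comm] using
      hφ.comp_affineMap (AffineMap.lineMap x y)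
  have := hline.le_slope_of_hasDerivAt (mem_univ 0) (mem_univ 1) zero_lt_one
    (HasGradientAt.hasDerivAt_comp_add_smul_s7 (by simpa using h))
  simp only [slope_def_field] at this
  norm_num at this
  linarith

theorem le_add_inner_sub_add_of_lipschitzWith {φ : H → ℝ} {φ' : H → H}
    (h : ∀ x, HasGradientAt φ (φ' x) x) {K : NNReal} (hK : LipschitzWith K φ') (x y : H) :
    φ y ≤ φ x + ⟪φ' x, y - x⟫ + K / 2 * ‖y - x‖ ^ 2 := by
  set d := y - x
  let q : ℝ → ℝ := fun t => φ (x + t • d) - t * ⟪φ' x, d⟫ - K / 2 * t ^ 2 * ‖d‖ ^ 2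
  have hq : ∀ t, HasDerivAt q (⟪φ' (x + t • d), d⟫ - ⟪φ' x, d⟫ - K * t * ‖d‖ ^ 2) t := by
    intro t
    refine ((((h _).hasDerivAt_comp_add_smul_s7 (x := x) (d := d)).fun_sub
      ((hasDerivAt_id' t).mul_const ⟪φ' x, d⟫)).fun_sub
      (((hasDerivAt_pow 2 t).const_mul (K / 2 : ℝ)).mul_const (‖d‖ ^ 2))).congr_deriv ?_
    ring
  have hanti : AntitoneOn q (Ici 0) := by
    refine antitoneOn_of_hasDerivWithinAt_nonpos (convex_Ici 0)
      (fun t _ => (hq t).continuousAt.continuousWithinAt) (fun t _ => (hq t).hasDerivWithinAt)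
      fun t ht => ?_
    rw [interior_Ici, mem_Ioi] at ht
    have hlip : ‖φ' (x + t • d) - φ' x‖ ≤ K * (t * ‖d‖) := by
      simpa [norm_smul, abs_of_pos ht] using hK.norm_sub_le (x + t • d) x
    have := real_inner_le_norm (φ' (x + t • d) - φ' x) d
    rw [inner_sub_left] at this
    nlinarith [norm_nonneg d]
  have := hanti self_mem_Ici (show (0 : ℝ) ≤ 1 by norm_num) zero_le_one
  simp only [q, d] at this
  norm_num at this
  linarith

theorem ConvexOn.norm_sub_sq_le_two_mul {φ : H → ℝ} (hφ : ConvexOn ℝ univ φ) {φ' : H → H}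
    (h : ∀ x, HasGradientAt φ (φ' x) x) {K : NNReal} (hK : LipschitzWith K φ') (a b : H) :
    ‖φ' b - φ' a‖ ^ 2 ≤ 2 * K * (φ b - φ a - ⟪φ' a, b - a⟫) := by
  rcases eq_or_ne K 0 with rfl | hK0
  · simp [show φ' b = φ' a by simpa using hK.dist_le_mul b a]
  set g := φ' b - φ' a
  set b' := b - (K⁻¹ : ℝ) • g
  have hdesc := le_add_inner_sub_add_of_lipschitzWith h hK b b'
  have hfirst := hφ.add_inner_sub_le (h a) b'
  have hb' : b' - b = -((K⁻¹ : ℝ) • g) := by simp only [b']; abel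
  have ha' : b' - a = (b - a) - (K⁻¹ : ℝ) • g := by simp only [b']; abel
  rw [hb', inner_neg_right, real_inner_smul_right, norm_neg, norm_smul, mul_pow,
    Real.norm_eq_abs, sq_abs] at hdesc
  rw [ha', inner_sub_right, real_inner_smul_right] at hfirst
  have hg : ⟪φ' b, g⟫ - ⟪φ' a, g⟫ = ‖g‖ ^ 2 := by
    rw [← inner_sub_left, real_inner_self_eq_norm_sq]
  have hg' : (K : ℝ)⁻¹ * ⟪φ' b, g⟫ - (K : ℝ)⁻¹ * ⟪φ' a, g⟫ = (K : ℝ)⁻¹ * ‖g‖ ^ 2 := by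
    rw [← mul_sub, hg]
  have hquad : (K : ℝ) / 2 * ((K : ℝ)⁻¹ ^ 2 * ‖g‖ ^ 2) = (K : ℝ)⁻¹ * ‖g‖ ^ 2 / 2 := by
    field_simp
  have : (K : ℝ)⁻¹ * ‖g‖ ^ 2 / 2 ≤ φ b - φ a - ⟪φ' a, b - a⟫ := by linarith
  calc ‖g‖ ^ 2 = 2 * K * ((K : ℝ)⁻¹ * ‖g‖ ^ 2 / 2) := by field_simp
    _ ≤ _ := by gcongr

theorem ConvexOn.norm_sub_sq_le_mul_inner {φ : H → ℝ} (hφ : ConvexOn ℝ univ φ) {φ' : H → H}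
    (h : ∀ x, HasGradientAt φ (φ' x) x) {K : NNReal} (hK : LipschitzWith K φ') (x y : H) :
    ‖φ' x - φ' y‖ ^ 2 ≤ K * ⟪φ' x - φ' y, x - y⟫ := by
  have hxy := hφ.norm_sub_sq_le_two_mul h hK x y
  have hyx := hφ.norm_sub_sq_le_two_mul h hK y x
  rw [norm_sub_rev] at hxy
  have : ⟪φ' x - φ' y, x - y⟫ = -⟪φ' x, y - x⟫ - ⟪φ' y, x - y⟫ := by
    rw [← neg_sub x y, inner_neg_right, inner_sub_left]; ring
  rw [this]
  linarith

theorem ConvexOn.mul_norm_sub_sq_le_inner {φ : H → ℝ} (hφ : ConvexOn ℝ univ φ) {φ' : H → H}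
    (h : ∀ x, HasGradientAt φ (φ' x) x) {β : ℝ} (hβ : 0 < β)
    (hφ' : LipschitzWith (1 / β).toNNReal φ') (x y : H) :
    β * ‖φ' x - φ' y‖ ^ 2 ≤ ⟪φ' x - φ' y, x - y⟫ := by
  have := hφ.norm_sub_sq_le_mul_inner h hφ' x y
  rwa [Real.coe_toNNReal _ (by positivity), one_div, inv_mul_eq_div, le_div_iff₀ hβ,
    mul_comm] at this

theorem HasGradientAt.comp_starProjection {φ : H → ℝ} {φ' x : H} (V : Submodule ℝ H)
    [V.HasOrthogonalProjection] (h : HasGradientAt φ φ' (V.starProjection x)) :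
    HasGradientAt (fun y => φ (V.starProjection y)) (V.starProjection φ') x := by
  rw [hasGradientAt_iff_hasFDerivAt] at h ⊢
  refine (h.comp x V.starProjection.hasFDerivAt).congr_fderiv ?_
  ext v
  simp [V.inner_starProjection_left_eq_right]

end Operators

lemma Finset.sum_range_le_of_le_sub {a d : ℕ → ℝ} (h : ∀ k, a (k + 1) ≤ a k - d k) (n : ℕ)
    (ha : 0 ≤ a n) : ∑ i ∈ Finset.range n, d i ≤ a 0 := by
  calc ∑ i ∈ Finset.range n, d i ≤ ∑ i ∈ Finset.range n, (a i - a (i + 1)) :=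
        Finset.sum_le_sum fun i _ => by linarith [h i]
    _ = a 0 - a n := Finset.sum_range_sub' a n
    _ ≤ a 0 := by linarith

lemma fdrs_relaxation_bound {βV γ α ε lam : ℝ} (hγ : γ ∈ Ioo 0 (2 * βV))
    (hα : α = 2 * βV / (4 * βV - γ)) (hε : ε ∈ Ioo 0 1)
    (hlam : lam < (1 - ε) * (1 + ε * α) / α) :
    lam < 2 ∧ γ ^ 2 ≤ (2 - lam) * (2 * γ * βV - ε * γ * (2 * βV - γ) / (1 + ε)) := by
  obtain ⟨hγ0, hγ2⟩ := hγ
  obtain ⟨hε0, hε1⟩ := hε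
  have hβV : 0 < βV := by linarith
  have h4 : 0 < 4 * βV - γ := by linarith
  have hα0 : 0 < α := hα ▸ div_pos (by positivity) h4
  have hαc : α * (4 * βV - γ) = 2 * βV := hα ▸ div_mul_cancel₀ _ h4.ne'
  replace hlam : lam * (2 * βV) < (1 - ε) * (4 * βV - γ + ε * (2 * βV)) :=
    calc lam * (2 * βV) = lam * α * (4 * βV - γ) := by linear_combination -lam * hαc
      _ < (1 - ε) * (1 + ε * α) * (4 * βV - γ) :=
        mul_lt_mul_of_pos_right ((lt_div_iff₀ hα0).1 hlam) h4
      _ = _ := by linear_combination (1 - ε) * ε * hαc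
  have hlam2 : lam < 2 := by nlinarith [mul_pos hε0 hβV, mul_pos (mul_pos hε0 hε0) hβV]
  refine ⟨hlam2, ?_⟩
  have hM : γ * (1 - ε) + ε * (2 * βV) * (1 + ε) < (2 - lam) * (2 * βV) := by nlinarith
  have hsq : γ * (1 + ε) * (2 * βV)
      ≤ (γ * (1 - ε) + ε * (2 * βV) * (1 + ε)) * (2 * βV + ε * γ) := by
    -- the difference is `ε ((2βV - γ)² + ε ((2βV)² - γ²) + ε (1 + ε) γ 2βV)`
    nlinarith [mul_nonneg hε0.le (sq_nonneg (2 * βV - γ)),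
      mul_pos (mul_pos hε0 hε0) (mul_pos hγ0 hβV),
      mul_pos (mul_pos hε0 hε0) (show 0 < (2 * βV) ^ 2 - γ ^ 2 by nlinarith),
      mul_pos (mul_pos (mul_pos hε0 hε0) hε0) (mul_pos hγ0 hβV)]
  have hγb : γ * (1 + ε) ≤ (2 - lam) * (2 * βV + ε * γ) := by
    refine le_of_mul_le_mul_right ?_ (show 0 < 2 * βV by positivity)
    nlinarith [mul_le_mul_of_nonneg_right hM.le (show 0 ≤ 2 * βV + ε * γ by positivity)]
  rw [show 2 * γ * βV - ε * γ * (2 * βV - γ) / (1 + ε) = γ * (2 * βV + ε * γ) / (1 + ε) by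
    field_simp; ring]
  rw [← mul_div_assoc, le_div_iff₀ (by linarith)]
  nlinarith [mul_le_mul_of_nonneg_left hγb hγ0.le]

theorem fdrs_gradient_summability_general
    {H : Type*} [NormedAddCommGroup H] [InnerProductSpace ℝ H] [CompleteSpace H]
    (V : Submodule ℝ H) [CompleteSpace V]
    (PV : H → H) (hPV : ∀ x, PV x = (Submodule.orthogonalProjection V x : H))
    (f g : H → ℝ) (gradg gradh proxf : H → H)
    (βV γ α : ℝ) (hβV : 0 < βV)
    (hγ : γ ∈ Set.Ioo (0 : ℝ) (2 * βV))
    (hα : α = 2 * βV / (4 * βV - γ))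
    (hfconv : ConvexOn ℝ Set.univ f)
    (hgconv : ConvexOn ℝ Set.univ g)
    (hgdiff : ∀ x, HasGradientAt g (gradg x) x)
    (hgradh : ∀ x, gradh x = PV (gradg (PV x)))
    (hgradhlip : LipschitzWith (1 / βV).toNNReal gradh)
    (hprox : ∀ x, IsMinOn (fun y => f y + (1 / (2 * γ)) * ‖y - x‖ ^ 2) Set.univ (proxf x))
    (T : H → H)
    (hT : ∀ z, T z = (1 / 2 : ℝ) • (z - γ • gradh z)
        + (1 / 2 : ℝ) • ((2 : ℝ) • proxf ((2 : ℝ) • PV (z - γ • gradh z) - (z - γ • gradh z))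
            - ((2 : ℝ) • PV (z - γ • gradh z) - (z - γ • gradh z))))
    -- relaxation parameters and iterates
    (ε : ℝ) (hε : ε ∈ Set.Ioo (0 : ℝ) 1)
    (lam : ℕ → ℝ)
    (hlam : ∀ k, lam k ∈ Set.Ioo (0 : ℝ) ((1 - ε) * (1 + ε * α) / α))
    (z : ℕ → H)
    (hz : ∀ k, z (k + 1) = (1 - lam k) • z k + lam k • T (z k))
    (zs : H) (hzs : T zs = zs) :
    ∀ n : ℕ, ∑ i ∈ Finset.range n, lam i * ‖gradh (z i) - gradh zs‖ ^ 2
      ≤ (1 + ε) * ‖z 0 - zs‖ ^ 2 / (γ * ε * (2 * βV - γ)) := by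
  intro n
  obtain rfl : PV = V.starProjection := funext hPV
  have hN := (firmlyNonexpansive_of_isMinOn_prox hfconv hγ.1 hprox).douglasRachford V
  have hcoco := (hgconv.comp_linearMap V.starProjection.toLinearMap).mul_norm_sub_sq_le_inner
    (fun x => hgradh x ▸ (hgdiff _).comp_starProjection V) hβV hgradhlip
  set D := ε * γ * (2 * βV - γ) / (1 + ε)
  have hstep : ∀ k, ‖z (k + 1) - zs‖ ^ 2
      ≤ ‖z k - zs‖ ^ 2 - D * (lam k * ‖gradh (z k) - gradh zs‖ ^ 2) := fun k => by
    obtain ⟨hlam2, hD⟩ := fdrs_relaxation_bound hγ hα hε (hlam k).2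
    rw [hz, ← mul_assoc, mul_comm D]
    exact hN.norm_relaxed_step_sub_sq_le hcoco hγ.1.le hT (hlam k).1.le hlam2 hD hzs
  have hsum := Finset.sum_range_le_of_le_sub (a := fun k => ‖z k - zs‖ ^ 2) hstep n
    (sq_nonneg _)
  rw [← Finset.mul_sum] at hsum
  have hD : 0 < D := div_pos (mul_pos (mul_pos hε.1 hγ.1) (sub_pos.2 hγ.2)) (by linarith [hε.1])
  calc _ ≤ ‖z 0 - zs‖ ^ 2 / D := (le_div_iff₀' hD).2 hsum
    _ = _ := by rw [div_div_eq_mul_div]; ring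

/-- gradient summability for the FDRS iteration. -/
theorem fdrs_gradient_summability
    {H : Type*} [NormedAddCommGroup H] [InnerProductSpace ℝ H] [CompleteSpace H]
    (V : Submodule ℝ H) [CompleteSpace V]
    (PV : H → H) (hPV : ∀ x, PV x = (Submodule.orthogonalProjection V x : H))
    (f g : H → ℝ) (gradg gradh proxf : H → H)
    (β βV γ α : ℝ) (hβ : 0 < β) (hβV : 0 < βV)
    (hγ : γ ∈ Set.Ioo (0 : ℝ) (2 * βV))
    (hα : α = 2 * βV / (4 * βV - γ))
    (hfconv : ConvexOn ℝ Set.univ f) (hfcont : Continuous f)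
    (hgconv : ConvexOn ℝ Set.univ g)
    (hgdiff : ∀ x, HasGradientAt g (gradg x) x)
    (hglip : LipschitzWith (1 / β).toNNReal gradg)
    (hgradh : ∀ x, gradh x = PV (gradg (PV x)))
    (hgradhlip : LipschitzWith (1 / βV).toNNReal gradh)
    (hprox : ∀ x, IsMinOn (fun y => f y + (1 / (2 * γ)) * ‖y - x‖ ^ 2) Set.univ (proxf x))
    (T : H → H)
    (hT : ∀ z, T z = (1 / 2 : ℝ) • (z - γ • gradh z)
        + (1 / 2 : ℝ) • ((2 : ℝ) • proxf ((2 : ℝ) • PV (z - γ • gradh z) - (z - γ • gradh z))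
            - ((2 : ℝ) • PV (z - γ • gradh z) - (z - γ • gradh z))))
    -- relaxation parameters and iterates
    (ε : ℝ) (hε : ε ∈ Set.Ioo (0 : ℝ) 1)
    (lam : ℕ → ℝ)
    (hlam : ∀ k, lam k ∈ Set.Ioo (0 : ℝ) ((1 - ε) * (1 + ε * α) / α))
    (z : ℕ → H)
    (hz : ∀ k, z (k + 1) = (1 - lam k) • z k + lam k • T (z k))
    (zs : H) (hzs : T zs = zs) :
    ∀ n : ℕ, ∑ i ∈ Finset.range n, lam i * ‖gradh (z i) - gradh zs‖ ^ 2
      ≤ (1 + ε) * ‖z 0 - zs‖ ^ 2 / (γ * ε * (2 * βV - γ)) :=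
  fdrs_gradient_summability_general V PV hPV f g gradg gradh proxf βV γ α hβV hγ hα hfconv hgconv
    hgdiff hgradh hgradhlip hprox T hT ε hε lam hlam z hz zs hzs
end

section
/- (Nonergodic convergence of FDRS.) Let γ ∈ (0, 2β_V) and (λ_k)_{k≥0} ⊆ (0, 1/α), and suppose τ̲ := inf_{j≥0} (1 − αλ_j)λ_j/α > 0. Let p ∈ ∂f(x*) and q ∈ V⊥ satisfy p + ∇h(x*) + q = 0 (such p, q exist). Then for all k ≥ 0: (i) ‖x_f^k − x_h^k‖ ≤ ‖z⁰ − z*‖/√(τ̲(k+1)), and ‖x_f^k − x_h^k‖ = o(1/√(k+1)); (ii) −‖z⁰ − z*‖·‖p‖/√(τ̲(k+1)) ≤ f(x_f^k) + h(x_h^k) − f(x*) − h(x*) ≤ (‖z* − x*‖ + (1 + γ/β_V)‖z⁰ − z*‖ + γ‖∇h(x*)‖)‖z⁰ − z*‖ / (γ√(τ̲(k+1))); and (iii) |f(x_f^k) + h(x_h^k) − f(x*) − h(x*)| = o(1/√(k+1)). -/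
/-!
The FDRS operator is the composition of the forward step `I - γ∇h`, which is
`γ/(2β_V)`-averaged because `∇h` is `β_V`-cocoercive (Baillon–Haddad), with
`½ (I + refl_{γf} ∘ refl_V)`, which is `½`-averaged; hence `T` is `α`-averaged.
Along the relaxed Krasnosel'skiĭ–Mann iteration of an `α`-averaged operator the squared
distance to a fixed point drops by at least `τ ‖T zᵏ - zᵏ‖²` per step and the residual
`‖T zᵏ - zᵏ‖` is nonincreasing, so `(k+1) ‖T zᵏ - zᵏ‖² ≤ ‖z⁰ - z*‖² / τ`, and the squared
residuals, being monotone and summable, are `o(1/(k+1))`. Finally `T zᵏ - zᵏ = x_fᵏ - x_hᵏ`,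
and the objective gap is bounded below through the certificate `(p, q)` and above through
the prox inequality and the convexity of `h`, both linearly in `‖x_fᵏ - x_hᵏ‖`.
-/

open scoped RealInnerProductSpace
open Set Filter Asymptotics Topology

section Averaged

variable {H : Type*} [NormedAddCommGroup H] [InnerProductSpace ℝ H]
  {α α₁ α₂ β γ μ : ℝ} {G T T₁ T₂ : H → H}

def Cocoercive (β : ℝ) (G : H → H) : Prop :=
  ∀ x y, β * ‖G x - G y‖ ^ 2 ≤ ⟪G x - G y, x - y⟫

/-- For `0 < α < 1` this is equivalent to `T = (1 - α) I + α N` with `N` nonexpansive. -/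
def IsAveraged (α : ℝ) (T : H → H) : Prop :=
  ∀ u v, ‖T u - T v‖ ^ 2 + (1 - α) / α * ‖(u - T u) - (v - T v)‖ ^ 2 ≤ ‖u - v‖ ^ 2

theorem Cocoercive.isAveraged_sub_smul (hG : Cocoercive β G) (hβ : 0 < β) (hγ : 0 < γ) :
    IsAveraged (γ / (2 * β)) fun z => z - γ • G z := by
  intro u v
  have hκ : (1 - γ / (2 * β)) / (γ / (2 * β)) = (2 * β - γ) / γ := by
    field_simp
  rw [hκ, show u - γ • G u - (v - γ • G v) = (u - v) - γ • (G u - G v) by module,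
    show u - (u - γ • G u) - (v - (v - γ • G v)) = γ • (G u - G v) by module,
    norm_sub_sq_real, norm_smul, real_inner_smul_right, Real.norm_of_nonneg hγ.le,
    real_inner_comm]
  have e : (2 * β - γ) / γ * (γ * ‖G u - G v‖) ^ 2 = (2 * β - γ) * γ * ‖G u - G v‖ ^ 2 := by
    field_simp
  nlinarith [hG u v]

theorem isAveraged_half_add_half {N : H → H} (hN : ∀ x y, ‖N x - N y‖ ≤ ‖x - y‖) :
    IsAveraged (1 / 2) fun x => (1 / 2 : ℝ) • x + (1 / 2 : ℝ) • N x := by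
  intro x y
  have hpar := parallelogram_law_with_norm ℝ (x - y) (N x - N y)
  have hNxy := pow_le_pow_left₀ (norm_nonneg _) (hN x y) 2
  rw [show (1 / 2 : ℝ) • x + (1 / 2 : ℝ) • N x - ((1 / 2 : ℝ) • y + (1 / 2 : ℝ) • N y)
      = (1 / 2 : ℝ) • ((x - y) + (N x - N y)) by module,
    show x - ((1 / 2 : ℝ) • x + (1 / 2 : ℝ) • N x) - (y - ((1 / 2 : ℝ) • y + (1 / 2 : ℝ) • N y))
      = (1 / 2 : ℝ) • ((x - y) - (N x - N y)) by module,
    norm_smul, norm_smul, Real.norm_of_nonneg (by norm_num)]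
  nlinarith

theorem mul_div_add_mul_norm_add_sq_le {κ₁ κ₂ : ℝ} (h₁ : 0 < κ₁) (h₂ : 0 < κ₂) (a b : H) :
    κ₁ * κ₂ / (κ₁ + κ₂) * ‖a + b‖ ^ 2 ≤ κ₁ * ‖a‖ ^ 2 + κ₂ * ‖b‖ ^ 2 := by
  rw [div_mul_eq_mul_div, div_le_iff₀ (by positivity)]
  have := norm_sub_sq_real (κ₁ • a) (κ₂ • b)
  rw [norm_smul, norm_smul, real_inner_smul_left, real_inner_smul_right, Real.norm_of_nonneg h₁.le,
    Real.norm_of_nonneg h₂.le] at this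
  rw [norm_add_sq_real]
  nlinarith [norm_nonneg (κ₁ • a - κ₂ • b)]

theorem IsAveraged.comp (h₁ : IsAveraged α₁ T₁) (h₂ : IsAveraged α₂ T₂) (hα₁ : α₁ ∈ Ioo 0 1)
    (hα₂ : α₂ ∈ Ioo 0 1) :
    IsAveraged ((α₁ + α₂ - 2 * α₁ * α₂) / (1 - α₁ * α₂)) (T₂ ∘ T₁) := by
  obtain ⟨hα₁0, hα₁1⟩ := hα₁
  obtain ⟨hα₂0, hα₂1⟩ := hα₂
  intro u v
  set α := (α₁ + α₂ - 2 * α₁ * α₂) / (1 - α₁ * α₂)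
  have hκ : (1 - α) / α
      = (1 - α₁) / α₁ * ((1 - α₂) / α₂) / ((1 - α₁) / α₁ + (1 - α₂) / α₂) := by
    have h₃ : 1 - α₁ * α₂ ≠ 0 := by nlinarith
    rw [div_add_div _ _ hα₁0.ne' hα₂0.ne', one_sub_div h₃, div_div_div_cancel_right₀ h₃,
      div_mul_div_comm, div_div_div_cancel_right₀ (by positivity)]
    congr 1 <;> ring
  have hsplit : (u - (T₂ ∘ T₁) u) - (v - (T₂ ∘ T₁) v)
      = ((u - T₁ u) - (v - T₁ v)) + ((T₁ u - T₂ (T₁ u)) - (T₁ v - T₂ (T₁ v))) := by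
    simp only [Function.comp]; abel
  rw [hκ, hsplit, Function.comp_apply, Function.comp_apply]
  have := mul_div_add_mul_norm_add_sq_le (div_pos (sub_pos.2 hα₁1) hα₁0)
    (div_pos (sub_pos.2 hα₂1) hα₂0) ((u - T₁ u) - (v - T₁ v))
    ((T₁ u - T₂ (T₁ u)) - (T₁ v - T₂ (T₁ v)))
  linarith [h₁ u v, h₂ (T₁ u) (T₁ v)]

theorem IsAveraged.norm_relax_sub_sq_le (hT : IsAveraged α T) (hα : 0 < α) (hμ : 0 ≤ μ)
    (u v : H) :
    ‖((1 - μ) • u + μ • T u) - ((1 - μ) • v + μ • T v)‖ ^ 2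
      ≤ ‖u - v‖ ^ 2 - (1 - α * μ) * μ / α * ‖(T u - u) - (T v - v)‖ ^ 2 := by
  set δ := (T u - u) - (T v - v)
  have h := hT u v
  rw [show T u - T v = (u - v) + δ by simp only [δ]; abel,
    show (u - T u) - (v - T v) = -δ by simp only [δ]; abel, norm_neg, norm_add_sq_real] at h
  have hinner : 2 * ⟪u - v, δ⟫ ≤ -(1 / α) * ‖δ‖ ^ 2 := by
    have : 1 + (1 - α) / α = 1 / α := by field_simp; ring
    nlinarith
  rw [show (1 - μ) • u + μ • T u - ((1 - μ) • v + μ • T v) = (u - v) + μ • δ by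
    simp only [δ]; module, norm_add_sq_real, real_inner_smul_right, norm_smul,
    Real.norm_of_nonneg hμ]
  have : (1 - α * μ) * μ / α = μ * (1 / α) - μ ^ 2 := by field_simp
  rw [this]
  nlinarith [mul_le_mul_of_nonneg_left hinner hμ]

end Averaged

section Smooth

variable {H : Type*} [NormedAddCommGroup H] [InnerProductSpace ℝ H] [CompleteSpace H]
  {φ : H → ℝ} {G : H → H} {K : NNReal} {g x y : H}

theorem HasGradientAt.hasDerivAt_add_smul {d : H} {t : ℝ}
    (hφ : HasGradientAt φ g (x + t • d)) :
    HasDerivAt (fun s : ℝ => φ (x + s • d)) ⟪g, d⟫ t := by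
  have hline : HasDerivAt (fun s : ℝ => x + s • d) d t := by
    simpa using ((hasDerivAt_id t).smul_const d).const_add x
  simpa [Function.comp_def] using hφ.hasFDerivAt.comp_hasDerivAt t hline

theorem ConvexOn.add_inner_le_of_hasGradientAt_s10 (hφ : ConvexOn ℝ univ φ)
    (hg : HasGradientAt φ g x) (y : H) : φ x + ⟪g, y - x⟫ ≤ φ y := by
  have hline : ConvexOn ℝ univ (fun t : ℝ => φ (x + t • (y - x))) := by
    have h := hφ.comp_affineMap (AffineMap.lineMap x y)
    rw [preimage_univ] at h
    refine h.congr fun t _ => ?_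
    simp [AffineMap.lineMap_apply_module', add_comm]
  have hder : HasDerivAt (fun t : ℝ => φ (x + t • (y - x))) ⟪g, y - x⟫ 0 :=
    HasGradientAt.hasDerivAt_add_smul (by simpa using hg)
  have := hline.le_slope_of_hasDerivAt (mem_univ 0) (mem_univ 1) zero_lt_one hder
  simp only [slope_def_field, one_smul, zero_smul, add_zero, sub_zero, div_one,
    add_sub_cancel] at this
  linarith

theorem le_add_inner_add_of_lipschitzWith (hφ : ∀ x, HasGradientAt φ (G x) x)
    (hG : LipschitzWith K G) (x y : H) :
    φ y ≤ φ x + ⟪G x, y - x⟫ + K / 2 * ‖y - x‖ ^ 2 := by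
  set d := y - x
  let χ : ℝ → ℝ := fun t => φ (x + t • d) - t * ⟪G x, d⟫ - K / 2 * t ^ 2 * ‖d‖ ^ 2
  have hχ : ∀ t, HasDerivAt χ (⟪G (x + t • d), d⟫ - ⟪G x, d⟫ - K * t * ‖d‖ ^ 2) t := by
    intro t
    have h₁ := (hφ (x + t • d)).hasDerivAt_add_smul
    have h₂ := (hasDerivAt_id t).mul_const ⟪G x, d⟫
    have h₃ := ((hasDerivAt_pow 2 t).const_mul (K / 2 : ℝ)).mul_const (‖d‖ ^ 2)
    exact ((h₁.sub h₂).sub h₃).congr_deriv (by push_cast; ring)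
  have hanti : AntitoneOn χ (Icc 0 1) := by
    refine antitoneOn_of_deriv_nonpos (convex_Icc 0 1)
      (fun t _ => (hχ t).continuousAt.continuousWithinAt)
      (fun t _ => (hχ t).differentiableAt.differentiableWithinAt) fun t ht => ?_
    rw [interior_Icc] at ht
    have hLip : ⟪G (x + t • d) - G x, d⟫ ≤ K * t * ‖d‖ ^ 2 :=
      calc ⟪G (x + t • d) - G x, d⟫ ≤ ‖G (x + t • d) - G x‖ * ‖d‖ := real_inner_le_norm _ _
        _ ≤ K * ‖t • d‖ * ‖d‖ := by
          gcongr; simpa using hG.norm_sub_le (x + t • d) x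
        _ = K * t * ‖d‖ ^ 2 := by rw [norm_smul, Real.norm_of_nonneg ht.1.le]; ring
    rw [(hχ t).deriv, ← inner_sub_left]
    linarith
  have h01 := hanti (left_mem_Icc.2 zero_le_one) (right_mem_Icc.2 zero_le_one) zero_le_one
  simp only [χ, one_smul, zero_smul, add_zero, one_mul, zero_mul, one_pow, mul_one,
    sub_zero, ne_eq, OfNat.ofNat_ne_zero, not_false_eq_true, zero_pow, mul_zero] at h01
  rw [show x + d = y by simp [d]] at h01
  linarith

/-- Combining the gradient inequality at `x` with the descent lemma at `y` along the step
`y - K⁻¹ (G y - G x)`. -/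
theorem ConvexOn.add_inner_add_norm_sq_div_le (hφc : ConvexOn ℝ univ φ)
    (hφ : ∀ x, HasGradientAt φ (G x) x) (hG : LipschitzWith K G) (hK : 0 < K) (x y : H) :
    φ x + ⟪G x, y - x⟫ + ‖G y - G x‖ ^ 2 / (2 * K) ≤ φ y := by
  set Δ := G y - G x
  have h₁ := hφc.add_inner_le_of_hasGradientAt_s10 (hφ x) (y - (K : ℝ)⁻¹ • Δ)
  have h₂ := le_add_inner_add_of_lipschitzWith hφ hG y (y - (K : ℝ)⁻¹ • Δ)
  have hK' : (0 : ℝ) < K := hK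
  rw [show y - (K : ℝ)⁻¹ • Δ - x = (y - x) - (K : ℝ)⁻¹ • Δ by abel, inner_sub_right,
    real_inner_smul_right] at h₁
  rw [sub_sub_cancel_left, inner_neg_right, norm_neg, real_inner_smul_right, norm_smul,
    Real.norm_of_nonneg (by positivity)] at h₂
  have hΔ : ⟪G y, Δ⟫ - ⟪G x, Δ⟫ = ‖Δ‖ ^ 2 := by
    rw [← inner_sub_left, real_inner_self_eq_norm_sq]
  have : (K : ℝ) / 2 * ((K : ℝ)⁻¹ * ‖Δ‖) ^ 2 = ‖Δ‖ ^ 2 / (2 * K) := by field_simp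
  have : (K : ℝ)⁻¹ * ⟪G y, Δ⟫ - (K : ℝ)⁻¹ * ⟪G x, Δ⟫ = ‖Δ‖ ^ 2 / K := by
    rw [← mul_sub, hΔ]; field_simp
  have : ‖Δ‖ ^ 2 / K = 2 * (‖Δ‖ ^ 2 / (2 * K)) := by field_simp
  linarith

/-- The Baillon–Haddad theorem. -/
theorem ConvexOn.cocoercive_of_lipschitzWith (hφc : ConvexOn ℝ univ φ)
    (hφ : ∀ x, HasGradientAt φ (G x) x) (hG : LipschitzWith K G) (hK : 0 < K) :
    Cocoercive (K : ℝ)⁻¹ G := by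
  intro x y
  have h₁ := hφc.add_inner_add_norm_sq_div_le hφ hG hK x y
  have h₂ := hφc.add_inner_add_norm_sq_div_le hφ hG hK y x
  rw [norm_sub_rev] at h₁
  have : ⟪G x, y - x⟫ + ⟪G y, x - y⟫ = -⟪G x - G y, x - y⟫ := by
    rw [← neg_sub x y, inner_neg_right, inner_sub_left]; ring
  have : ‖G x - G y‖ ^ 2 / (2 * K) + ‖G x - G y‖ ^ 2 / (2 * K)
      = (K : ℝ)⁻¹ * ‖G x - G y‖ ^ 2 := by field_simp; ring
  linarith

theorem inner_sub_le_add_sub_sub_of_optimality {V : Submodule ℝ H} {f h : H → ℝ} {p q xs x : H}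
    (hp : ∀ y, f xs + ⟪y - xs, p⟫ ≤ f y) (hh : ConvexOn ℝ univ h) (hg : HasGradientAt h g xs)
    (hq : q ∈ Vᗮ) (hpq : p + g + q = 0) (hx : x - xs ∈ V) (y : H) :
    ⟪y - x, p⟫ ≤ f y + h x - f xs - h xs := by
  have hf := hp y
  have hh := hh.add_inner_le_of_hasGradientAt_s10 hg x
  rw [show g = -p - q by rw [← sub_eq_zero, ← hpq]; abel, inner_sub_left, inner_neg_left,
    Submodule.inner_left_of_mem_orthogonal hx hq, real_inner_comm] at hh
  rw [show y - x = (y - xs) - (x - xs) by abel, inner_sub_left]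
  linarith

end Smooth

section Prox

variable {H : Type*} [NormedAddCommGroup H] [InnerProductSpace ℝ H]
  {f : H → ℝ} {γ : ℝ} {prox : H → H}

def IsProxMap (f : H → ℝ) (γ : ℝ) (prox : H → H) : Prop :=
  ∀ x, IsMinOn (fun y => f y + 1 / (2 * γ) * ‖y - x‖ ^ 2) univ (prox x)

theorem IsProxMap.inner_le_add (hp : IsProxMap f γ prox) (hf : ConvexOn ℝ univ f) (hγ : 0 < γ)
    (x y : H) {t : ℝ} (ht : t ∈ Ioo 0 1) :
    ⟪y - prox x, x - prox x⟫ ≤ γ * (f y - f (prox x)) + t / 2 * ‖y - prox x‖ ^ 2 := by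
  set P := prox x
  obtain ⟨ht₀, ht₁⟩ := ht
  have hmin : f P + 1 / (2 * γ) * ‖P - x‖ ^ 2
      ≤ f (P + t • (y - P)) + 1 / (2 * γ) * ‖P + t • (y - P) - x‖ ^ 2 :=
    hp x (mem_univ _)
  have hconv : f (P + t • (y - P)) ≤ (1 - t) * f P + t * f y := by
    have := hf.2 (mem_univ P) (mem_univ y) (by linarith : (0 : ℝ) ≤ 1 - t) ht₀.le (by ring)
    rwa [smul_eq_mul, smul_eq_mul, show (1 - t) • P + t • y = P + t • (y - P) by module]
      at this
  have hnorm : ‖P + t • (y - P) - x‖ ^ 2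
      = ‖P - x‖ ^ 2 - 2 * t * ⟪y - P, x - P⟫ + t ^ 2 * ‖y - P‖ ^ 2 := by
    rw [show P + t • (y - P) - x = t • (y - P) - (x - P) by abel, norm_sub_sq_real,
      norm_smul, real_inner_smul_left, Real.norm_of_nonneg ht₀.le, norm_sub_rev x P]
    ring
  rw [hnorm] at hmin
  have h : 0 ≤ t * (f y - f P)
      + 1 / (2 * γ) * (t ^ 2 * ‖y - P‖ ^ 2 - 2 * t * ⟪y - P, x - P⟫) := by
    linarith
  have hprod : 0 ≤ t * (2 * γ * (f y - f P) + t * ‖y - P‖ ^ 2 - 2 * ⟪y - P, x - P⟫) := by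
    rw [show t * (2 * γ * (f y - f P) + t * ‖y - P‖ ^ 2 - 2 * ⟪y - P, x - P⟫)
      = 2 * γ * (t * (f y - f P)
        + 1 / (2 * γ) * (t ^ 2 * ‖y - P‖ ^ 2 - 2 * t * ⟪y - P, x - P⟫)) by field_simp; ring]
    positivity
  linarith [nonneg_of_mul_nonneg_right hprod ht₀]

theorem IsProxMap.inner_le (hp : IsProxMap f γ prox) (hf : ConvexOn ℝ univ f) (hγ : 0 < γ)
    (x y : H) : ⟪y - prox x, x - prox x⟫ ≤ γ * (f y - f (prox x)) := by
  have hc : Continuous fun t : ℝ => γ * (f y - f (prox x)) + t / 2 * ‖y - prox x‖ ^ 2 := by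
    fun_prop
  refine ge_of_tendsto (by simpa using (hc.tendsto 0).mono_left (nhdsWithin_le_nhds (s := Ioi 0)))
    (eventually_of_mem (Ioo_mem_nhdsGT one_pos) fun t ht => hp.inner_le_add hf hγ x y ht)

theorem IsProxMap.norm_sub_sq_le_inner (hp : IsProxMap f γ prox) (hf : ConvexOn ℝ univ f)
    (hγ : 0 < γ) (x x' : H) :
    ‖prox x - prox x'‖ ^ 2 ≤ ⟪prox x - prox x', x - x'⟫ := by
  have h₁ := hp.inner_le hf hγ x (prox x')
  have h₂ := hp.inner_le hf hγ x' (prox x)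
  have e : ⟪prox x' - prox x, x - prox x⟫ + ⟪prox x - prox x', x' - prox x'⟫
      = ‖prox x - prox x'‖ ^ 2 - ⟪prox x - prox x', x - x'⟫ := by
    rw [← real_inner_self_eq_norm_sq, ← neg_sub (prox x), inner_neg_left, neg_add_eq_sub,
      ← inner_sub_right, ← inner_sub_right]
    congr 1; abel
  linarith

theorem IsProxMap.norm_reflection_sub_le (hp : IsProxMap f γ prox) (hf : ConvexOn ℝ univ f)
    (hγ : 0 < γ) (x x' : H) :
    ‖((2 : ℝ) • prox x - x) - ((2 : ℝ) • prox x' - x')‖ ≤ ‖x - x'‖ := by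
  have hfirm := hp.norm_sub_sq_le_inner hf hγ x x'
  rw [show ((2 : ℝ) • prox x - x) - ((2 : ℝ) • prox x' - x')
      = (2 : ℝ) • (prox x - prox x') - (x - x') by module]
  refine sq_le_sq₀ (norm_nonneg _) (norm_nonneg _) |>.1 ?_
  rw [norm_sub_sq_real, norm_smul, real_inner_smul_left, Real.norm_two]
  nlinarith

end Prox

section Sequences

theorem Antitone.succ_mul_le_sum_range {r : ℕ → ℝ} (hr : Antitone r) (k : ℕ) :
    ((k : ℝ) + 1) * r k ≤ ∑ j ∈ Finset.range (k + 1), r j := by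
  have := Finset.card_nsmul_le_sum (Finset.range (k + 1)) r (r k)
    fun j hj => hr (Nat.lt_succ_iff.mp (Finset.mem_range.mp hj))
  simpa using this

/-- Olivier's theorem: `r k ≤ 2/(k+1) ∑_{j ≥ k/2} r j`, a tail of a convergent series. -/
theorem Summable.tendsto_succ_mul_of_antitone {r : ℕ → ℝ} (hs : Summable r) (hr : Antitone r) :
    Tendsto (fun k : ℕ => ((k : ℝ) + 1) * r k) atTop (𝓝 0) := by
  have hr0 : ∀ k, 0 ≤ r k := hr.le_of_tendsto hs.tendsto_atTop_zero
  have htail : Tendsto (fun k : ℕ => 2 * ∑' j, r (j + k / 2)) atTop (𝓝 0) := by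
    simpa using ((tendsto_sum_nat_add r).comp (Nat.tendsto_div_const_atTop two_ne_zero)).const_mul 2
  refine squeeze_zero (fun k => by have := hr0 k; positivity) (fun k => ?_) htail
  have hcard : ((k : ℝ) + 1) ≤ 2 * ((k + 1 - k / 2 : ℕ) : ℝ) := by
    have : k + 1 ≤ 2 * (k + 1 - k / 2) := by omega
    exact_mod_cast this
  calc ((k : ℝ) + 1) * r k ≤ 2 * (((k + 1 - k / 2 : ℕ) : ℝ) * r k) := by
        nlinarith [hr0 k]
    _ ≤ 2 * ∑ j ∈ Finset.range (k + 1 - k / 2), r (j + k / 2) := by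
        gcongr
        have := Finset.card_nsmul_le_sum (Finset.range (k + 1 - k / 2)) (fun j => r (j + k / 2))
          (r k) fun j hj => hr (by have := Finset.mem_range.mp hj; omega)
        simpa using this
    _ ≤ 2 * ∑' j, r (j + k / 2) := by
        gcongr
        exact ((summable_nat_add_iff (k / 2)).2 hs).sum_le_tsum _ fun j _ => hr0 _

theorem le_div_sqrt_of_mul_sq_le {a c x : ℝ} (hc : 0 ≤ c) (hx : 0 < x) (h : x * a ^ 2 ≤ c ^ 2) :
    a ≤ c / √x := by
  rw [← Real.sqrt_sq hc, ← Real.sqrt_div' _ hx.le]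
  exact (le_abs_self a).trans (Real.abs_le_sqrt (by rw [le_div_iff₀ hx]; linarith))

theorem isLittleO_one_div_sqrt_of_tendsto {a : ℕ → ℝ}
    (h : Tendsto (fun k : ℕ => ((k : ℝ) + 1) * a k ^ 2) atTop (𝓝 0)) :
    a =o[atTop] fun k : ℕ => 1 / √((k : ℝ) + 1) := by
  rw [isLittleO_iff_tendsto fun k hk => absurd hk (by positivity),
    tendsto_zero_iff_abs_tendsto_zero]
  convert (Real.continuous_sqrt.tendsto 0).comp h using 1
  · ext k
    dsimp only [Function.comp_apply]
    rw [Real.sqrt_mul (by positivity), Real.sqrt_sq_eq_abs, div_div_eq_mul_div,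
      div_one, abs_mul, abs_of_nonneg (Real.sqrt_nonneg _), mul_comm]
  · simp

theorem isLittleO_abs_of_neg_mul_le_of_le_mul {e u ψ : ℕ → ℝ} {a b : ℝ}
    (hlow : ∀ k, -(a * u k) ≤ e k) (hup : ∀ k, e k ≤ b * u k) (hu₀ : ∀ k, 0 ≤ u k)
    (hu : u =o[atTop] ψ) : (fun k => |e k|) =o[atTop] ψ := by
  refine (IsBigO.of_bound (max a b) (Eventually.of_forall fun k => ?_)).trans_isLittleO hu
  rw [Real.norm_eq_abs, abs_abs, Real.norm_of_nonneg (hu₀ k), abs_le]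
  constructor
  · nlinarith [hlow k, le_max_left a b, hu₀ k]
  · nlinarith [hup k, le_max_right a b, hu₀ k]

end Sequences

section KrasnoselskiiMann

variable {H : Type*} [NormedAddCommGroup H] [InnerProductSpace ℝ H]
  {α τ : ℝ} {T : H → H} {lam : ℕ → ℝ} {z : ℕ → H} {zs : H}

theorem IsAveraged.norm_sub_fixedPt_sq_add_sum_le (hT : IsAveraged α T) (hα : 0 < α)
    (hzs : T zs = zs) (hlam : ∀ k, 0 ≤ lam k) (hτ : ∀ k, τ ≤ (1 - α * lam k) * lam k / α)
    (hz : ∀ k, z (k + 1) = (1 - lam k) • z k + lam k • T (z k)) (n : ℕ) :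
    ‖z n - zs‖ ^ 2 + τ * ∑ k ∈ Finset.range n, ‖T (z k) - z k‖ ^ 2 ≤ ‖z 0 - zs‖ ^ 2 := by
  induction n with
  | zero => simp
  | succ n ih =>
    have h := hT.norm_relax_sub_sq_le hα (hlam n) (z n) zs
    rw [← hz n, hzs, sub_self, sub_zero, show (1 - lam n) • zs + lam n • zs = zs by module] at h
    have := mul_le_mul_of_nonneg_right (hτ n) (sq_nonneg ‖T (z n) - z n‖)
    rw [Finset.sum_range_succ]
    linarith

theorem one_sub_mul_mul_div_nonneg {μ : ℝ} (hα : 0 < α) (hμ : μ ∈ Ioc 0 (1 / α)) :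
    0 ≤ (1 - α * μ) * μ / α := by
  have : 0 ≤ 1 - α * μ := by have := hμ.2; rw [le_div_iff₀ hα] at this; linarith
  have := hμ.1
  positivity

theorem IsAveraged.norm_sub_fixedPt_le (hT : IsAveraged α T) (hα : 0 < α) (hzs : T zs = zs)
    (hlam : ∀ k, lam k ∈ Ioc 0 (1 / α))
    (hz : ∀ k, z (k + 1) = (1 - lam k) • z k + lam k • T (z k)) (k : ℕ) :
    ‖z k - zs‖ ≤ ‖z 0 - zs‖ := by
  have := hT.norm_sub_fixedPt_sq_add_sum_le hα hzs (fun k => (hlam k).1.le)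
    (fun k => one_sub_mul_mul_div_nonneg hα (hlam k)) hz k
  rw [zero_mul, add_zero] at this
  exact pow_le_pow_iff_left₀ (norm_nonneg _) (norm_nonneg _) two_ne_zero |>.1 this

theorem IsAveraged.antitone_norm_sub_self (hT : IsAveraged α T) (hα : 0 < α)
    (hlam : ∀ k, lam k ∈ Ioc 0 (1 / α))
    (hz : ∀ k, z (k + 1) = (1 - lam k) • z k + lam k • T (z k)) :
    Antitone fun k => ‖T (z k) - z k‖ ^ 2 := by
  refine antitone_nat_of_succ_le fun k => ?_
  obtain ⟨hl₀, hl₁⟩ := hlam k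
  have h := hT.norm_relax_sub_sq_le hα hl₀.le (z (k + 1)) (z k)
  have hstep : ∀ w, (1 - lam k) • w + lam k • T w - w = lam k • (T w - w) := fun w => by module
  have hz' : z (k + 1) - z k = lam k • (T (z k) - z k) := by rw [hz k, hstep]
  rw [← hz k, hstep, hz'] at h
  have hsq : ‖lam k • (T (z (k + 1)) - z (k + 1))‖ ^ 2 ≤ ‖lam k • (T (z k) - z k)‖ ^ 2 :=
    h.trans (sub_le_self _ (mul_nonneg (one_sub_mul_mul_div_nonneg hα (hlam k)) (sq_nonneg _)))
  rw [norm_smul, norm_smul, mul_pow, mul_pow] at hsq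
  exact le_of_mul_le_mul_left hsq (pow_pos (norm_pos_iff.2 hl₀.ne') 2)

theorem IsAveraged.norm_sub_self_le_div_sqrt (hT : IsAveraged α T) (hα : 0 < α)
    (hzs : T zs = zs) (hlam : ∀ k, lam k ∈ Ioc 0 (1 / α))
    (hτ : ∀ k, τ ≤ (1 - α * lam k) * lam k / α) (hτ₀ : 0 < τ)
    (hz : ∀ k, z (k + 1) = (1 - lam k) • z k + lam k • T (z k)) (k : ℕ) :
    ‖T (z k) - z k‖ ≤ ‖z 0 - zs‖ / √(τ * (k + 1)) := by
  refine le_div_sqrt_of_mul_sq_le (norm_nonneg _) (by positivity) ?_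
  have hsum := hT.norm_sub_fixedPt_sq_add_sum_le hα hzs (fun k => (hlam k).1.le) hτ hz (k + 1)
  have hmul := (hT.antitone_norm_sub_self hα hlam hz).succ_mul_le_sum_range k
  nlinarith [sq_nonneg ‖z (k + 1) - zs‖]

theorem IsAveraged.isLittleO_norm_sub_self (hT : IsAveraged α T) (hα : 0 < α)
    (hzs : T zs = zs) (hlam : ∀ k, lam k ∈ Ioc 0 (1 / α))
    (hτ : ∀ k, τ ≤ (1 - α * lam k) * lam k / α) (hτ₀ : 0 < τ)
    (hz : ∀ k, z (k + 1) = (1 - lam k) • z k + lam k • T (z k)) :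
    (fun k => ‖T (z k) - z k‖) =o[atTop] fun k : ℕ => 1 / √((k : ℝ) + 1) := by
  have hsum : ∀ n, ∑ k ∈ Finset.range n, ‖T (z k) - z k‖ ^ 2 ≤ ‖z 0 - zs‖ ^ 2 / τ := fun n => by
    rw [le_div_iff₀ hτ₀]
    nlinarith [hT.norm_sub_fixedPt_sq_add_sum_le hα hzs (fun k => (hlam k).1.le) hτ hz n,
      sq_nonneg ‖z n - zs‖]
  exact isLittleO_one_div_sqrt_of_tendsto <|
    (summable_of_sum_range_le (fun _ => sq_nonneg _) hsum).tendsto_succ_mul_of_antitone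
      (hT.antitone_norm_sub_self hα hlam hz)

end KrasnoselskiiMann

section FDRS

variable {H : Type*} [NormedAddCommGroup H] [InnerProductSpace ℝ H]
  (V : Submodule ℝ H) [V.HasOrthogonalProjection]

theorem norm_two_smul_starProjection_sub (x : H) : ‖(2 : ℝ) • V.starProjection x - x‖ = ‖x‖ := by
  rw [two_smul, ← two_nsmul, ← Submodule.reflection_apply, LinearIsometryEquiv.norm_map]

theorem HasGradientAt.comp_starProjection_s10 [CompleteSpace H] {g : H → ℝ} {g' x : H}
    (hg : HasGradientAt g g' (V.starProjection x)) :
    HasGradientAt (fun x => g (V.starProjection x)) (V.starProjection g') x := by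
  rw [hasGradientAt_iff_hasFDerivAt] at hg ⊢
  refine (hg.comp x V.starProjection.hasFDerivAt).congr_fderiv ?_
  ext v
  simp [Submodule.inner_starProjection_left_eq_right]

theorem ConvexOn.comp_starProjection_s10 {g : H → ℝ} (hg : ConvexOn ℝ univ g) :
    ConvexOn ℝ univ fun x => g (V.starProjection x) := by
  have := hg.comp_linearMap V.starProjection.toLinearMap
  rw [preimage_univ] at this
  exact this

/-- `(½ I + ½ refl_{γf} ∘ refl_V) ∘ (I - γ G)`, where `prox = prox_{γf}`. -/
noncomputable def fdrsOperator (γ : ℝ) (G prox : H → H) (z : H) : H :=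
  let w := z - γ • G z
  let r := (2 : ℝ) • V.starProjection w - w
  (1 / 2 : ℝ) • w + (1 / 2 : ℝ) • ((2 : ℝ) • prox r - r)

variable {V}

theorem isAveraged_fdrsOperator {f : H → ℝ} {β γ : ℝ} {G prox : H → H} (hG : Cocoercive β G)
    (hγ : γ ∈ Ioo 0 (2 * β)) (hf : ConvexOn ℝ univ f) (hp : IsProxMap f γ prox) :
    IsAveraged (2 * β / (4 * β - γ)) (fdrsOperator V γ G prox) := by
  obtain ⟨hγ₀, hγβ⟩ := hγ
  have hβ : 0 < β := by linarith
  set R : H → H := fun x => (2 : ℝ) • V.starProjection x - x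
  have hN : ∀ x y, ‖((2 : ℝ) • prox (R x) - R x) - ((2 : ℝ) • prox (R y) - R y)‖ ≤ ‖x - y‖ :=
    fun x y => by
      refine (hp.norm_reflection_sub_le hf hγ₀ _ _).trans_eq ?_
      rw [← norm_two_smul_starProjection_sub V (x - y), map_sub]
      congr 1; module
  have := (hG.isAveraged_sub_smul hβ hγ₀).comp (isAveraged_half_add_half hN)
    ⟨by positivity, by rwa [div_lt_one (by positivity)]⟩ ⟨by norm_num, by norm_num⟩
  convert this using 1
  · field_simp
    ring
  · rfl

theorem fdrsOperator_sub_self {γ : ℝ} {G prox : H → H} {z : H} (hG : G z ∈ V) :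
    fdrsOperator V γ G prox z - z
      = prox ((2 : ℝ) • V.starProjection (z - γ • G z) - (z - γ • G z)) - V.starProjection z := by
  rw [fdrsOperator, map_sub, map_smul, V.starProjection_eq_self_iff.2 hG]
  module

theorem fdrs_gap_le_inner [CompleteSpace H] {f h : H → ℝ} {γ : ℝ} {prox : H → H} {g z xs : H}
    (hp : IsProxMap f γ prox) (hf : ConvexOn ℝ univ f) (hγ : 0 < γ) (hh : ConvexOn ℝ univ h)
    (hg : HasGradientAt h g (V.starProjection z)) (hgV : g ∈ V) (hxs : xs ∈ V) :
    γ * (f (prox ((2 : ℝ) • V.starProjection (z - γ • g) - (z - γ • g)))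
        + h (V.starProjection z) - f xs - h xs)
      ≤ ⟪prox ((2 : ℝ) • V.starProjection (z - γ • g) - (z - γ • g)) - V.starProjection z,
          xs - z - γ • g⟫ := by
  set xh := V.starProjection z
  set r := (2 : ℝ) • V.starProjection (z - γ • g) - (z - γ • g)
  set xf := prox r
  have hr : r = (2 : ℝ) • xh - z - γ • g := by
    simp only [r, xh, map_sub, map_smul, V.starProjection_eq_self_iff.2 hgV]; module
  have hprox := hp.inner_le hf hγ r xs
  have hgrad := hh.add_inner_le_of_hasGradientAt_s10 hg xs
  have horth : ⟪z - xh, xh - xs⟫ = 0 :=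
    V.starProjection_inner_eq_zero z _ (V.sub_mem (V.starProjection_apply_mem z) hxs)
  have key : ⟪xs - xf, r - xf⟫ + γ * ⟪g, xs - xh⟫
      = ‖xf - xh‖ ^ 2 - ⟪xf - xh, xs - z - γ • g⟫ := by
    rw [hr, show xs - xf = -((xf - xh) + (xh - xs)) by abel,
      show (2 : ℝ) • xh - z - γ • g - xf = -((xf - xh) + (z - xh) + γ • g) by module,
      show xs - xh = -(xh - xs) by abel,
      show xs - z - γ • g = -((xh - xs) + (z - xh) + γ • g) by abel, ← real_inner_self_eq_norm_sq]
    simp only [inner_neg_left, inner_neg_right, inner_add_left, inner_add_right,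
      real_inner_smul_right]
    rw [real_inner_comm (xf - xh) (xh - xs), real_inner_comm (z - xh) (xh - xs), horth,
      real_inner_comm (xh - xs) g]
    ring
  nlinarith [sq_nonneg ‖xf - xh‖]

theorem LipschitzWith.norm_sub_sub_smul_le {G : H → H} {K : NNReal} {γ : ℝ}
    (hG : LipschitzWith K G) (hγ : 0 ≤ γ) (x y z : H) :
    ‖x - z - γ • G z‖ ≤ ‖y - x‖ + (1 + γ * K) * ‖z - y‖ + γ * ‖G y‖ := by
  rw [show x - z - γ • G z = -(y - x) - (z - y) - γ • (G z - G y) - γ • G y by module]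
  have h₁ := _root_.norm_sub_le (-(y - x) - (z - y) - γ • (G z - G y)) (γ • G y)
  have h₂ := _root_.norm_sub_le (-(y - x) - (z - y)) (γ • (G z - G y))
  have h₃ := _root_.norm_sub_le (-(y - x)) (z - y)
  have hLip := mul_le_mul_of_nonneg_left (hG.norm_sub_le z y) hγ
  rw [norm_neg] at h₃
  rw [norm_smul, Real.norm_of_nonneg hγ] at h₁ h₂
  linarith

theorem fdrs_gap_le [CompleteSpace H] {f h : H → ℝ} {γ D : ℝ} {K : NNReal} {G prox : H → H}
    {z zs : H} (hp : IsProxMap f γ prox) (hf : ConvexOn ℝ univ f) (hγ : 0 < γ)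
    (hh : ConvexOn ℝ univ h) (hG : ∀ x, HasGradientAt h (G x) x) (hGV : ∀ x, G x ∈ V)
    (hGP : ∀ x, G (V.starProjection x) = G x) (hGlip : LipschitzWith K G) (hD : ‖z - zs‖ ≤ D) :
    f (prox ((2 : ℝ) • V.starProjection (z - γ • G z) - (z - γ • G z))) + h (V.starProjection z)
        - f (V.starProjection zs) - h (V.starProjection zs)
      ≤ (‖zs - V.starProjection zs‖ + (1 + γ * K) * D + γ * ‖G (V.starProjection zs)‖) / γ
        * ‖prox ((2 : ℝ) • V.starProjection (z - γ • G z) - (z - γ • G z))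
          - V.starProjection z‖ := by
  have hgap := fdrs_gap_le_inner hp hf hγ hh (hGP z ▸ hG _) (hGV z) (V.starProjection_apply_mem zs)
  have hvec := hGlip.norm_sub_sub_smul_le hγ.le (V.starProjection zs) zs z
  rw [← hGP zs] at hvec
  rw [div_mul_eq_mul_div, le_div_iff₀ hγ, mul_comm _ γ, mul_comm _ ‖_‖]
  refine hgap.trans <| (real_inner_le_norm _ _).trans <|
    mul_le_mul_of_nonneg_left (hvec.trans ?_) (norm_nonneg _)
  gcongr

end FDRS

theorem fdrs_nonergodic_convergence_general
    {H : Type*} [NormedAddCommGroup H] [InnerProductSpace ℝ H] [CompleteSpace H]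
    (V : Submodule ℝ H) [CompleteSpace V]
    (PV : H → H) (hPV : ∀ x, PV x = (V.orthogonalProjectionOnto x : H))
    (f g : H → ℝ) (gradg gradh proxf : H → H) (h : H → ℝ)
    (βV γ α : ℝ) (hβV : 0 < βV)
    (hγ : γ ∈ Set.Ioo (0 : ℝ) (2 * βV))
    (hα : α = 2 * βV / (4 * βV - γ))
    (hfconv : ConvexOn ℝ Set.univ f)
    (hgconv : ConvexOn ℝ Set.univ g)
    (hgdiff : ∀ x, HasGradientAt g (gradg x) x)
    (hh : ∀ x, h x = g (PV x))
    (hgradh : ∀ x, gradh x = PV (gradg (PV x)))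
    (hgradhlip : LipschitzWith (1 / βV).toNNReal gradh)
    (hprox : ∀ x, IsMinOn (fun y => f y + (1 / (2 * γ)) * ‖y - x‖ ^ 2) Set.univ (proxf x))
    (T : H → H)
    (hT : ∀ z, T z = (1 / 2 : ℝ) • (z - γ • gradh z)
        + (1 / 2 : ℝ) • ((2 : ℝ) • proxf ((2 : ℝ) • PV (z - γ • gradh z) - (z - γ • gradh z))
            - ((2 : ℝ) • PV (z - γ • gradh z) - (z - γ • gradh z))))
    -- relaxation parameters and iterates
    (lam : ℕ → ℝ) (hlam : ∀ k, lam k ∈ Set.Ioo (0 : ℝ) (1 / α))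
    (τ : ℝ) (hτ : τ = ⨅ j : ℕ, (1 - α * lam j) * lam j / α) (hτpos : 0 < τ)
    (z : ℕ → H)
    (hz : ∀ k, z (k + 1) = (1 - lam k) • z k + lam k • T (z k))
    (xh xf : ℕ → H)
    (hxh : ∀ k, xh k = PV (z k))
    (hxf : ∀ k, xf k = proxf ((2 : ℝ) • PV (z k - γ • gradh (z k)) - (z k - γ • gradh (z k))))
    -- a fixed point z* of T, x* := P_V z*, and a subgradient decomposition of 0
    (zs xs : H) (hzs : T zs = zs) (hxs : xs = PV zs)
    (p q : H)
    (hp : ∀ y : H, f xs + ⟪y - xs, p⟫ ≤ f y)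
    (hq : q ∈ Vᗮ)
    (hpq : p + gradh xs + q = 0) :
    -- (i)
    (∀ k : ℕ, ‖xf k - xh k‖ ≤ ‖z 0 - zs‖ / Real.sqrt (τ * (k + 1))) ∧
    ((fun k : ℕ => ‖xf k - xh k‖) =o[atTop] fun k : ℕ => 1 / Real.sqrt (k + 1)) ∧
    -- (ii)
    (∀ k : ℕ,
      -(‖z 0 - zs‖ * ‖p‖ / Real.sqrt (τ * (k + 1)))
        ≤ f (xf k) + h (xh k) - f xs - h xs ∧
      f (xf k) + h (xh k) - f xs - h xs
        ≤ (‖zs - xs‖ + (1 + γ / βV) * ‖z 0 - zs‖ + γ * ‖gradh xs‖) * ‖z 0 - zs‖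
            / (γ * Real.sqrt (τ * (k + 1)))) ∧
    -- (iii)
    ((fun k : ℕ => |f (xf k) + h (xh k) - f xs - h xs|)
      =o[atTop] fun k : ℕ => 1 / Real.sqrt (k + 1)) := by
  obtain ⟨hγ₀, hγβ⟩ := hγ
  obtain rfl : PV = V.starProjection := funext hPV
  have hα₀ : 0 < α := by rw [hα]; exact div_pos (by linarith) (by linarith)
  have hhg : h = fun x => g (V.starProjection x) := funext hh
  have hhconv : ConvexOn ℝ univ h := hhg ▸ hgconv.comp_starProjection_s10 V
  have hhgrad : ∀ x, HasGradientAt h (gradh x) x := fun x => by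
    rw [hhg, hgradh]; exact (hgdiff _).comp_starProjection_s10 V
  have hgradhV : ∀ x, gradh x ∈ V := fun x => hgradh x ▸ V.starProjection_apply_mem _
  have hgradhP : ∀ x, gradh (V.starProjection x) = gradh x := fun x => by
    rw [hgradh, hgradh, V.starProjection_eq_self_iff.2 (V.starProjection_apply_mem x)]
  have hK : ((1 / βV).toNNReal : ℝ) = 1 / βV := Real.coe_toNNReal _ (by positivity)
  have hcoco : Cocoercive βV gradh := by
    have := hhconv.cocoercive_of_lipschitzWith hhgrad hgradhlip
      (Real.toNNReal_pos.2 (by positivity))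
    rwa [hK, one_div, inv_inv] at this
  have hTfdrs : T = fdrsOperator V γ gradh proxf := funext hT
  have hTavg : IsAveraged α T :=
    hα ▸ hTfdrs ▸ isAveraged_fdrsOperator hcoco ⟨hγ₀, hγβ⟩ hfconv hprox
  have hres : ∀ k, xf k - xh k = T (z k) - z k := fun k => by
    rw [hxf, hxh, hTfdrs, fdrsOperator_sub_self (hgradhV _)]
  have hlam' : ∀ k, lam k ∈ Ioc 0 (1 / α) := fun k => Ioo_subset_Ioc_self (hlam k)
  have hτ' : ∀ k, τ ≤ (1 - α * lam k) * lam k / α := fun k =>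
    hτ ▸ ciInf_le ⟨0, forall_mem_range.2 fun j => one_sub_mul_mul_div_nonneg hα₀ (hlam' j)⟩ k
  have hi : ∀ k : ℕ, ‖xf k - xh k‖ ≤ ‖z 0 - zs‖ / √(τ * (k + 1)) := fun k =>
    hres k ▸ hTavg.norm_sub_self_le_div_sqrt hα₀ hzs hlam' hτ' hτpos hz k
  have hio : (fun k : ℕ => ‖xf k - xh k‖) =o[atTop] fun k : ℕ => 1 / √((k : ℝ) + 1) := by
    simpa only [hres] using hTavg.isLittleO_norm_sub_self hα₀ hzs hlam' hτ' hτpos hz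
  have hlow : ∀ k, -(‖p‖ * ‖xf k - xh k‖) ≤ f (xf k) + h (xh k) - f xs - h xs := fun k =>
    (neg_le_of_abs_le ((abs_real_inner_le_norm _ _).trans_eq (mul_comm _ _))).trans <|
      inner_sub_le_add_sub_sub_of_optimality hp hhconv (hhgrad xs) hq hpq
        (by rw [hxh, hxs, ← map_sub]; exact V.starProjection_apply_mem _) (xf k)
  set C := ‖zs - xs‖ + (1 + γ / βV) * ‖z 0 - zs‖ + γ * ‖gradh xs‖
  have hup : ∀ k, f (xf k) + h (xh k) - f xs - h xs ≤ C / γ * ‖xf k - xh k‖ := fun k => by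
    have := fdrs_gap_le hprox hfconv hγ₀ hhconv hhgrad hgradhV hgradhP hgradhlip
      (hTavg.norm_sub_fixedPt_le hα₀ hzs hlam' hz k)
    rwa [← hxf, ← hxh, ← hxs, hK, mul_one_div] at this
  refine ⟨hi, hio, fun k => ⟨?_, ?_⟩,
    isLittleO_abs_of_neg_mul_le_of_le_mul hlow hup (fun _ => norm_nonneg _) hio⟩
  · have := mul_le_mul_of_nonneg_left (hi k) (norm_nonneg p)
    rw [mul_div_assoc', mul_comm ‖p‖ ‖z 0 - zs‖] at this
    linarith [hlow k]
  · have := mul_le_mul_of_nonneg_left (hi k) (by positivity : 0 ≤ C / γ)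
    calc _ ≤ _ := (hup k).trans this
      _ = _ := by field_simp

/-- nonergodic convergence of FDRS. -/
theorem fdrs_nonergodic_convergence
    {H : Type*} [NormedAddCommGroup H] [InnerProductSpace ℝ H] [CompleteSpace H]
    (V : Submodule ℝ H) [CompleteSpace V]
    (PV : H → H) (hPV : ∀ x, PV x = (V.orthogonalProjectionOnto x : H))
    (f g : H → ℝ) (gradg gradh proxf : H → H) (h : H → ℝ)
    (β βV γ α : ℝ) (hβ : 0 < β) (hβV : 0 < βV)
    (hγ : γ ∈ Set.Ioo (0 : ℝ) (2 * βV))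
    (hα : α = 2 * βV / (4 * βV - γ))
    (hfconv : ConvexOn ℝ Set.univ f) (hfcont : Continuous f)
    (hgconv : ConvexOn ℝ Set.univ g)
    (hgdiff : ∀ x, HasGradientAt g (gradg x) x)
    (hglip : LipschitzWith (1 / β).toNNReal gradg)
    (hh : ∀ x, h x = g (PV x))
    (hgradh : ∀ x, gradh x = PV (gradg (PV x)))
    (hgradhlip : LipschitzWith (1 / βV).toNNReal gradh)
    (hprox : ∀ x, IsMinOn (fun y => f y + (1 / (2 * γ)) * ‖y - x‖ ^ 2) Set.univ (proxf x))
    (T : H → H)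
    (hT : ∀ z, T z = (1 / 2 : ℝ) • (z - γ • gradh z)
        + (1 / 2 : ℝ) • ((2 : ℝ) • proxf ((2 : ℝ) • PV (z - γ • gradh z) - (z - γ • gradh z))
            - ((2 : ℝ) • PV (z - γ • gradh z) - (z - γ • gradh z))))
    -- relaxation parameters and iterates
    (lam : ℕ → ℝ) (hlam : ∀ k, lam k ∈ Set.Ioo (0 : ℝ) (1 / α))
    (τ : ℝ) (hτ : τ = ⨅ j : ℕ, (1 - α * lam j) * lam j / α) (hτpos : 0 < τ)
    (z : ℕ → H)
    (hz : ∀ k, z (k + 1) = (1 - lam k) • z k + lam k • T (z k))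
    (xh xf : ℕ → H)
    (hxh : ∀ k, xh k = PV (z k))
    (hxf : ∀ k, xf k = proxf ((2 : ℝ) • PV (z k - γ • gradh (z k)) - (z k - γ • gradh (z k))))
    -- a fixed point z* of T, x* := P_V z*, and a subgradient decomposition of 0
    (zs xs : H) (hzs : T zs = zs) (hxs : xs = PV zs)
    (p q : H)
    (hp : ∀ y : H, f xs + ⟪y - xs, p⟫ ≤ f y)
    (hq : q ∈ Vᗮ)
    (hpq : p + gradh xs + q = 0) :
    -- (i)
    (∀ k : ℕ, ‖xf k - xh k‖ ≤ ‖z 0 - zs‖ / Real.sqrt (τ * (k + 1))) ∧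
    ((fun k : ℕ => ‖xf k - xh k‖) =o[atTop] fun k : ℕ => 1 / Real.sqrt (k + 1)) ∧
    -- (ii)
    (∀ k : ℕ,
      -(‖z 0 - zs‖ * ‖p‖ / Real.sqrt (τ * (k + 1)))
        ≤ f (xf k) + h (xh k) - f xs - h xs ∧
      f (xf k) + h (xh k) - f xs - h xs
        ≤ (‖zs - xs‖ + (1 + γ / βV) * ‖z 0 - zs‖ + γ * ‖gradh xs‖) * ‖z 0 - zs‖
            / (γ * Real.sqrt (τ * (k + 1)))) ∧
    -- (iii)
    ((fun k : ℕ => |f (xf k) + h (xh k) - f xs - h xs|)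
      =o[atTop] fun k : ℕ => 1 / Real.sqrt (k + 1)) :=
  fdrs_nonergodic_convergence_general V PV hPV f g gradg gradh proxf h βV γ α hβV hγ hα hfconv
    hgconv hgdiff hh hgradh hgradhlip hprox T hT lam hlam τ hτ hτpos z hz xh xf hxh hxf zs xs hzs
    hxs p q hp hq hpq
end
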